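/- arXiv:2605.03284 — 9 statements merged into one kernel-verified Lean document; each statement's English description precedes it below -/
import Mathlib

section
/- Let p ≥ 5 be a prime such that p + 1 is a power of 2 and (p-1)/2 is a power of an odd prime. Then p = 7. -/
theorem stmt_3 (p : ℕ) (hp : p.Prime) (h5 : 5 ≤ p)
    (h1 : ∃ k : ℕ, p + 1 = 2 ^ k)
    (h2 : ∃ q t : ℕ, q.Prime ∧ Odd q ∧ 1 ≤ t ∧ (p - 1) / 2 = q ^ t) :
    p = 7 := by
  obtain ⟨k, hk⟩ := h1
  obtain ⟨q, t, hq, hqodd, ht, hqt⟩ := h2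
  have hk3 : 3 ≤ k := by
    by_contra h
    interval_cases k <;> omega
  obtain ⟨m, hkm⟩ : ∃ m, k = m + 1 := ⟨k - 1, by omega⟩
  subst hkm
  have hpow : 2 ^ (m + 1) = 2 * 2 ^ m := by rw [pow_succ]; ring
  have hm2 : 2 ≤ m := by omega
  have h2m : 2 ≤ 2 ^ m := by
    calc 2 = 2 ^ 1 := by norm_num
    _ ≤ 2 ^ m := Nat.pow_le_pow_right (by norm_num) (by omega)
  have hqt1 : q ^ t + 1 = 2 ^ m := by
    generalize hg : q ^ t = Q at hqt ⊢
    omega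
  -- dispense with m = 2
  by_cases hmm : m = 2
  · subst hmm; omega
  have hm3 : 3 ≤ m := by omega
  have hq3 : 3 ≤ q := by
    obtain ⟨a, ha⟩ := hqodd
    have := hq.two_le
    omega
  -- t is odd
  have htodd : Odd t := by
    rcases Nat.even_or_odd t with he | ho
    · exfalso
      obtain ⟨s, hs⟩ := he
      have hsq : q ^ t = (q ^ s) ^ 2 := by rw [hs]; ring
      obtain ⟨a, ha⟩ := hqodd.pow (n := s)
      have hsq2 : (q ^ s) ^ 2 = 4 * (a * (a + 1)) + 1 := by rw [ha]; ring
      obtain ⟨b, hb⟩ := Nat.even_mul_succ_self a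
      obtain ⟨c, hc⟩ : (8 : ℕ) ∣ 2 ^ m := by
        have := pow_dvd_pow 2 hm3
        simpa using this
      generalize hg : q ^ t = Q at hqt1 hsq
      generalize hg2 : (q ^ s) ^ 2 = R at hsq hsq2
      omega
    · exact ho
  -- q + 1 divides 2 ^ m
  have hdvd : q + 1 ∣ 2 ^ m := by
    rw [← hqt1]
    have := htodd.nat_add_dvd_pow_add_pow q 1
    simpa using this
  obtain ⟨j, hjm, hj⟩ := (Nat.dvd_prime_pow Nat.prime_two).mp hdvd
  have hj2 : 2 ≤ j := by
    by_contra h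
    interval_cases j <;> omega
  have hq1 : (q : ℤ) + 1 = 2 ^ j := by exact_mod_cast congrArg (Nat.cast : ℕ → ℤ) hj
  -- j = m
  have hjem : j = m := by
    by_contra hne
    have hjm1 : j + 1 ≤ m := by omega
    have h2d : (2 : ℤ) ∣ (q : ℤ) - 1 := by
      obtain ⟨a, ha⟩ := hqodd
      have : (q : ℤ) = 2 * a + 1 := by exact_mod_cast congrArg (Nat.cast : ℕ → ℤ) ha
      exact ⟨a, by omega⟩
    have hA : (2 : ℤ) ^ (j + 1) ∣ (q : ℤ) ^ 2 - 1 := by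
      obtain ⟨a, ha⟩ := h2d
      exact ⟨a, by
        rw [show (q : ℤ) ^ 2 - 1 = ((q : ℤ) - 1) * ((q : ℤ) + 1) from by ring, ha, hq1]
        ring⟩
    have hB : (q : ℤ) ^ 2 - 1 ∣ (q : ℤ) ^ t - q := by
      obtain ⟨s, hs⟩ := htodd
      have heq : (q : ℤ) ^ t - q = (((q : ℤ) ^ 2) ^ s - 1 ^ s) * q := by
        rw [hs]; ring
      rw [heq]
      exact (sub_dvd_pow_sub_pow ((q : ℤ) ^ 2) 1 s).mul_right q
    have hC : (2 : ℤ) ^ (j + 1) ∣ (q : ℤ) ^ t + 1 := by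
      have hcast : ((q : ℤ) ^ t + 1) = 2 ^ m := by exact_mod_cast congrArg (Nat.cast : ℕ → ℤ) hqt1
      rw [hcast]
      exact pow_dvd_pow 2 hjm1
    have hD := dvd_sub hC (hA.trans hB)
    rw [show (q : ℤ) ^ t + 1 - ((q : ℤ) ^ t - (q : ℤ)) = (q : ℤ) + 1 from by ring, hq1] at hD
    have hle := Int.le_of_dvd (by positivity) hD
    have h2j : (2 : ℤ) ^ j < 2 ^ (j + 1) := by
      have : (0 : ℤ) < 2 ^ j := by positivity
      rw [pow_succ]; omega
    omega
  -- so q + 1 = 2 ^ m, hence t = 1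
  have hqm : q + 1 = 2 ^ m := hjem ▸ hj
  have ht1 : t = 1 := by
    have hqq : q ^ t = q ^ 1 := by
      have h1' : q ^ 1 = q := pow_one q
      generalize hg : q ^ t = Q at hqt1 ⊢
      omega
    exact Nat.pow_right_injective hq.two_le hqq
  -- now q = 2^m - 1 prime and p = 2^(m+1) - 1 prime, m ≥ 3: contradiction
  exfalso
  rcases Nat.even_or_odd m with ⟨s, hs⟩ | ⟨s, hs⟩
  · -- m = 2s, s ≥ 2, 3 ∣ q
    have h3 : (3 : ℕ) ∣ 2 ^ m - 1 := by
      have hdd := Nat.sub_dvd_pow_sub_pow 4 1 s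
      have h4 : (4 : ℕ) ^ s = 2 ^ m := by
        rw [hs, ← two_mul, pow_mul]; norm_num
      simpa [h4] using hdd
    have hq' : q = 2 ^ m - 1 := by omega
    have h3q : (3 : ℕ) = q := (Nat.prime_dvd_prime_iff_eq Nat.prime_three hq).mp (hq' ▸ h3)
    have : 2 ^ 4 ≤ 2 ^ m := Nat.pow_le_pow_right (by norm_num) (by omega)
    omega
  · -- m odd, m + 1 even, 3 ∣ p
    have h3 : (3 : ℕ) ∣ 2 ^ (m + 1) - 1 := by
      have hdd := Nat.sub_dvd_pow_sub_pow 4 1 (s + 1)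
      have h4 : (4 : ℕ) ^ (s + 1) = 2 ^ (m + 1) := by
        rw [show m + 1 = 2 * (s + 1) by omega, pow_mul]; norm_num
      simpa [h4] using hdd
    have hp' : p = 2 ^ (m + 1) - 1 := by omega
    have h3p : (3 : ℕ) = p := (Nat.prime_dvd_prime_iff_eq Nat.prime_three hp).mp (hp' ▸ h3)
    omega
end

section
/- If p is a prime such that p - 1 = 2^n for some n ≥ 2 and 2^(n-1) + 1 = 3^t for some natural number t, then p = 5 or p = 17. -/
theorem stmt_5 (p n t : ℕ) (hp : p.Prime) (hn : 2 ≤ n) (ht : 1 ≤ t)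
    (h1 : p - 1 = 2 ^ n) (h2 : 2 ^ (n - 1) + 1 = 3 ^ t) :
    p = 5 ∨ p = 17 := by
  have hppos := hp.pos
  by_cases h : n ≤ 4
  · interval_cases n
    · -- n = 2 : p - 1 = 4
      norm_num at h1
      left; omega
    · -- n = 3 : 5 = 3 ^ t, contradiction
      exfalso
      norm_num at h2
      have d : 3 ∣ 3 ^ t := dvd_pow_self 3 (by omega)
      omega
    · -- n = 4 : p - 1 = 16
      norm_num at h1
      right; omega
  · exfalso
    push_neg at h
    have hm : 4 ≤ n - 1 := by omega
    -- mod 16: 3^t ≡ 1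
    have h2z : ((2 ^ (n - 1) + 1 : ℕ) : ZMod 16) = ((3 ^ t : ℕ) : ZMod 16) := by
      rw [h2]
    push_cast at h2z
    obtain ⟨k, hk⟩ : ∃ k, n - 1 = 4 + k := ⟨n - 1 - 4, by omega⟩
    have e0 : (2 : ZMod 16) ^ (n - 1) = 0 := by
      rw [hk, pow_add]
      have : (2 : ZMod 16) ^ 4 = 0 := by decide
      rw [this, zero_mul]
    rw [e0, zero_add] at h2z
    have hpow : (3 : ZMod 16) ^ t = 1 := h2z.symm
    have h4t : t % 4 = 0 := by
      have hdecomp : t = 4 * (t / 4) + t % 4 := (Nat.div_add_mod t 4).symm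
      have h16_4 : (3 : ZMod 16) ^ 4 = 1 := by decide
      rw [hdecomp, pow_add, pow_mul, h16_4, one_pow, one_mul] at hpow
      have hlt : t % 4 < 4 := Nat.mod_lt _ (by norm_num)
      have hr : t % 4 = 0 ∨ t % 4 = 1 ∨ t % 4 = 2 ∨ t % 4 = 3 := by omega
      rcases hr with h' | h' | h' | h'
      · exact h'
      all_goals (rw [h'] at hpow; exact absurd hpow (by decide))
    obtain ⟨s, hs⟩ : ∃ s, t = 4 * s := ⟨t / 4, by omega⟩
    -- mod 5
    have h5 : ((2 ^ (n - 1) + 1 : ℕ) : ZMod 5) = ((3 ^ t : ℕ) : ZMod 5) := by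
      rw [h2]
    push_cast at h5
    have h3t : (3 : ZMod 5) ^ t = 1 := by
      rw [hs, pow_mul]
      have h54 : (3 : ZMod 5) ^ 4 = 1 := by decide
      rw [h54, one_pow]
    rw [h3t] at h5
    have hx : (2 : ZMod 5) ^ (n - 1) = 0 := by
      linear_combination h5
    have hdvd : (5 : ℕ) ∣ 2 ^ (n - 1) := by
      have hcast : ((2 ^ (n - 1) : ℕ) : ZMod 5) = 0 := by push_cast; exact hx
      exact (ZMod.natCast_eq_zero_iff _ _).mp hcast
    have h52 : (5 : ℕ) ∣ 2 := Nat.Prime.dvd_of_dvd_pow (by norm_num) hdvd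
    omega
end

section
/- If k ≥ 5 is a prime such that 2^k - 1 is prime, then 2^(k-1) - 1 is not a power of an odd prime. -/
theorem stmt_7 (k : ℕ) (hk : k.Prime) (h5 : 5 ≤ k)
    (hm : Nat.Prime (2 ^ k - 1)) :
    ¬ ∃ q t : ℕ, q.Prime ∧ Odd q ∧ 1 ≤ t ∧ 2 ^ (k - 1) - 1 = q ^ t := by
  rintro ⟨q, t, hq, hqodd, ht, heq⟩
  have hkodd : Odd k := hk.odd_of_ne_two (by omega)
  obtain ⟨m, hj⟩ := hkodd
  have hm2 : k - 1 = 2 * m := by omega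
  have hmge : 2 ≤ m := by omega
  have h4 : 4 ≤ 2 ^ m := by
    calc (4 : ℕ) = 2 ^ 2 := by norm_num
    _ ≤ 2 ^ m := Nat.pow_le_pow_right (by norm_num) hmge
  set a := 2 ^ m - 1 with hadef
  set b := 2 ^ m + 1 with hbdef
  have hab : a * b = 2 ^ (k - 1) - 1 := by
    have hpow : 2 ^ (k - 1) = 2 ^ m * 2 ^ m := by
      rw [hm2, two_mul, pow_add]
    obtain ⟨y, hy⟩ : ∃ y, 2 ^ m = y + 1 := ⟨2 ^ m - 1, by omega⟩
    have key : y * (y + 2) + 1 = (y + 1) * (y + 1) := by ring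
    have h := Nat.eq_sub_of_add_eq key
    rw [hadef, hbdef, hpow, hy]
    simpa using h
  have habq : a * b = q ^ t := by rw [hab, heq]
  have ha1 : 1 < a := by omega
  have hb1 : 1 < b := by omega
  -- q divides a
  have hdvd : ∀ c : ℕ, 1 < c → c ∣ q ^ t → q ∣ c := by
    intro c hc hcd
    have hp : c.minFac.Prime := Nat.minFac_prime (by omega)
    have : c.minFac ∣ q ^ t := (Nat.minFac_dvd c).trans hcd
    have : c.minFac = q := by
      have := hp.dvd_of_dvd_pow this
      exact (Nat.prime_dvd_prime_iff_eq hp hq).mp this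
    exact this ▸ Nat.minFac_dvd c
  have hqa : q ∣ a := hdvd a ha1 ⟨b, habq.symm⟩
  have hqb : q ∣ b := hdvd b hb1 ⟨a, by rw [mul_comm]; exact habq.symm⟩
  have hq2 : q ∣ 2 := by
    have : q ∣ b - a := Nat.dvd_sub hqb hqa
    have hba : b - a = 2 := by omega
    rwa [hba] at this
  have := Nat.le_of_dvd (by norm_num) hq2
  have := hq.two_le
  interval_cases q
  · simp [Nat.odd_iff] at hqodd
end

section
/- Let G be a finite group and H a subgroup of G. Then H admits an inverse-closed right transversal in G if and only if for every x ∈ G with x² ∈ H and |H| / |H ∩ x⁻¹Hx| odd, there exists y ∈ Hx with y² = 1. -/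
open Pointwise

lemma even_card_of_invol {α : Type*} [DecidableEq α] :
    ∀ (n : ℕ) (s : Finset α) (f : α → α), s.card = n →
      (∀ a ∈ s, f a ∈ s) → (∀ a ∈ s, f (f a) = a) → (∀ a ∈ s, f a ≠ a) →
      Even s.card := by
  intro n
  induction n using Nat.strong_induction_on with
  | _ n ih =>
    intro s f hcard hmaps hinv hne
    rcases s.eq_empty_or_nonempty with rfl | ⟨a, ha⟩
    · simp
    · have hfa : f a ∈ s := hmaps a ha
      have hfa_ne : f a ≠ a := hne a ha
      have h2 : 1 < s.card := Finset.one_lt_card.2 ⟨f a, hfa, a, ha, hfa_ne⟩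
      set s' := (s.erase a).erase (f a) with hs'
      have hmem_s' : ∀ x, x ∈ s' ↔ x ∈ s ∧ x ≠ a ∧ x ≠ f a := by
        intro x
        simp only [hs', Finset.mem_erase]
        tauto
      have hcard' : s'.card = s.card - 2 := by
        rw [hs', Finset.card_erase_of_mem, Finset.card_erase_of_mem ha]
        · omega
        · exact Finset.mem_erase.2 ⟨hfa_ne, hfa⟩
      have hmaps' : ∀ x ∈ s', f x ∈ s' := by
        intro x hx
        rcases (hmem_s' x).1 hx with ⟨hxs, hxa, hxfa⟩
        refine (hmem_s' (f x)).2 ⟨hmaps x hxs, ?_, ?_⟩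
        · intro h; exact hxfa (by rw [← hinv x hxs, h])
        · intro h
          have h2 : f (f x) = f (f a) := congrArg f h
          rw [hinv x hxs, hinv a ha] at h2
          exact hxa h2
      have hlt : s'.card < n := by omega
      have he : Even s'.card :=
        ih s'.card hlt s' f rfl hmaps'
          (fun x hx => hinv x ((hmem_s' x).1 hx).1)
          (fun x hx => hne x ((hmem_s' x).1 hx).1)
      have hEq : s.card = s'.card + 2 := by omega
      rw [hEq]
      exact he.add even_two

lemma odd_invol_fixed {α : Type*} [Finite α] (f : α → α)
    (hinv : ∀ a, f (f a) = a) (hodd : Odd (Nat.card α)) : ∃ a, f a = a := by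
  classical
  have := Fintype.ofFinite α
  by_contra h
  push_neg at h
  have := even_card_of_invol (Finset.univ.card) (Finset.univ : Finset α) f rfl
    (fun a _ => Finset.mem_univ _) (fun a _ => hinv a) (fun a _ => h a)
  rw [Nat.card_eq_fintype_card, ← Finset.card_univ] at hodd
  exact (Nat.not_even_iff_odd.2 hodd) this

lemma exists_pairing_even {α : Type*} [DecidableEq α] :
    ∀ (n : ℕ) (s : Finset α), s.card = n → Even n →
      ∃ f : α → α, ∀ a ∈ s, f a ∈ s ∧ f (f a) = a ∧ f a ≠ a := by
  intro n
  induction n using Nat.strong_induction_on with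
  | _ n ih =>
    intro s hcard heven
    rcases s.eq_empty_or_nonempty with rfl | ⟨a, ha⟩
    · exact ⟨id, by simp⟩
    · have h2 : 2 ≤ s.card := by
        rcases heven with ⟨k, hk⟩
        have h1 : 0 < s.card := Finset.card_pos.2 ⟨a, ha⟩
        omega
      have hne : (s.erase a).Nonempty := by
        rw [← Finset.card_pos, Finset.card_erase_of_mem ha]; omega
      obtain ⟨b, hb⟩ := hne
      have hbs : b ∈ s := Finset.mem_of_mem_erase hb
      have hbne : b ≠ a := Finset.ne_of_mem_erase hb
      set s' := (s.erase a).erase b with hs'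
      have hmem_s' : ∀ x, x ∈ s' ↔ x ∈ s ∧ x ≠ a ∧ x ≠ b := by
        intro x; simp only [hs', Finset.mem_erase]; tauto
      have hcard' : s'.card = s.card - 2 := by
        rw [hs', Finset.card_erase_of_mem hb, Finset.card_erase_of_mem ha]; omega
      obtain ⟨f', hf'⟩ := ih s'.card (by omega) s' rfl (by
        rcases heven with ⟨k, hk⟩; exact ⟨k - 1, by omega⟩)
      refine ⟨fun c => if c = a then b else if c = b then a else f' c, ?_⟩
      intro c hc
      by_cases hca : c = a
      · subst hca
        simp only [if_pos rfl, if_neg hbne]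
        exact ⟨hbs, by simp, hbne⟩
      · by_cases hcb : c = b
        · subst hcb
          simp only [if_neg hbne, if_pos rfl, if_neg hca]
          exact ⟨ha, by simp [hbne], fun h => hbne h.symm⟩
        · have hcs' : c ∈ s' := (hmem_s' c).2 ⟨hc, hca, hcb⟩
          rcases hf' c hcs' with ⟨h1, h2, h3⟩
          rcases (hmem_s' (f' c)).1 h1 with ⟨hf1, hf2, hf3⟩
          simp only [if_neg hca, if_neg hcb, if_neg hf2, if_neg hf3]
          exact ⟨hf1, h2, h3⟩

lemma exists_invol_even {α : Type*} [Finite α] (h : Even (Nat.card α)) :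
    ∃ π : α → α, (∀ a, π (π a) = a) ∧ (∀ a, π a ≠ a) := by
  classical
  have := Fintype.ofFinite α
  rw [Nat.card_eq_fintype_card, ← Finset.card_univ] at h
  obtain ⟨f, hf⟩ := exists_pairing_even (Finset.univ.card) (Finset.univ : Finset α) rfl h
  exact ⟨f, fun a => (hf a (Finset.mem_univ a)).2.1, fun a => (hf a (Finset.mem_univ a)).2.2⟩

lemma exists_invol_odd {α : Type*} [Finite α] (h : Odd (Nat.card α)) (a₀ : α) :
    ∃ π : α → α, (∀ a, π (π a) = a) ∧ (∀ a, π a = a ↔ a = a₀) := by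
  classical
  have := Fintype.ofFinite α
  have hcard : Nat.card {b : α // b ≠ a₀} = Nat.card α - 1 := by
    simp only [Nat.card_eq_fintype_card]
    rw [show Fintype.card { b // b ≠ a₀ } = Fintype.card {b : α // ¬ (b = a₀)} from rfl,
      Fintype.card_subtype_compl, Fintype.card_subtype_eq]
  have heven : Even (Nat.card {b : α // b ≠ a₀}) := by
    rcases h with ⟨k, hk⟩
    rw [hcard, hk]
    exact ⟨k, by omega⟩
  obtain ⟨π', h1, h2⟩ := exists_invol_even heven
  refine ⟨fun a => if ha : a = a₀ then a₀ else (π' ⟨a, ha⟩).1, ?_, ?_⟩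
  · intro a
    by_cases ha : a = a₀
    · simp [ha]
    · dsimp only
      rw [dif_neg ha, dif_neg (π' ⟨a, ha⟩).2]
      have := h1 ⟨a, ha⟩
      rw [Subtype.ext_iff] at this
      simpa using this
  · intro a
    constructor
    · intro hfix
      by_contra ha
      dsimp only at hfix
      rw [dif_neg ha] at hfix
      exact h2 ⟨a, ha⟩ (Subtype.ext hfix)
    · intro ha; simp [ha]

section GroupStuff

variable {G : Type*} [Group G] (H : Subgroup G)

/-- membership in the double coset `H x H` -/
def dc (x g : G) : Prop := ∃ u ∈ H, ∃ v ∈ H, g = u * x * v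

variable {H}

lemma dc_refl (x : G) : dc H x x := ⟨1, H.one_mem, 1, H.one_mem, by group⟩

lemma dc_symm {x g : G} (h : dc H x g) : dc H g x := by
  obtain ⟨u, hu, v, hv, rfl⟩ := h
  exact ⟨u⁻¹, H.inv_mem hu, v⁻¹, H.inv_mem hv, by group⟩

lemma dc_trans {x g k : G} (h1 : dc H x g) (h2 : dc H g k) : dc H x k := by
  obtain ⟨u, hu, v, hv, rfl⟩ := h1
  obtain ⟨a, ha, b, hb, rfl⟩ := h2
  exact ⟨a * u, H.mul_mem ha hu, v * b, H.mul_mem hv hb, by group⟩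

lemma dc_inv {x g : G} (h : dc H x g) : dc H x⁻¹ g⁻¹ := by
  obtain ⟨u, hu, v, hv, rfl⟩ := h
  exact ⟨v⁻¹, H.inv_mem hv, u⁻¹, H.inv_mem hu, by group⟩

lemma dc_mul_right {x g : G} (h : dc H x g) {w : G} (hw : w ∈ H) : dc H x (g * w) := by
  obtain ⟨u, hu, v, hv, rfl⟩ := h
  exact ⟨u, hu, v * w, H.mul_mem hv hw, by group⟩

lemma dc_mul_left {x g : G} (h : dc H x g) {w : G} (hw : w ∈ H) : dc H x (w * g) := by
  obtain ⟨u, hu, v, hv, rfl⟩ := h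
  exact ⟨w * u, H.mul_mem hw hu, v, hv, by group⟩

variable (H)

/-- the quotient by right cosets -/
abbrev RQ : Type _ := Quotient (QuotientGroup.rightRel H)

/-- class of `g` -/
abbrev rqmk (g : G) : RQ H := Quotient.mk (QuotientGroup.rightRel H) g

variable {H}

lemma rqmk_eq {a b : G} : rqmk H a = rqmk H b ↔ b * a⁻¹ ∈ H := by
  rw [Quotient.eq]
  exact QuotientGroup.rightRel_apply

lemma rqmk_mul_left {a : G} {u : G} (hu : u ∈ H) : rqmk H (u * a) = rqmk H a := by
  rw [rqmk_eq]
  simpa using H.inv_mem hu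

lemma dc_iff_mk {x g : G} : dc H x g ↔ ∃ v ∈ H, rqmk H g = rqmk H (x * v) := by
  constructor
  · rintro ⟨u, hu, v, hv, rfl⟩
    exact ⟨v, hv, by rw [rqmk_eq]; simpa [mul_assoc] using H.inv_mem hu⟩
  · rintro ⟨v, hv, hmk⟩
    rw [rqmk_eq] at hmk
    refine ⟨(x * v * g⁻¹)⁻¹, H.inv_mem hmk, v, hv, ?_⟩
    group

lemma mem_conj_smul {x a : G} : a ∈ MulAut.conj x⁻¹ • H ↔ x * a * x⁻¹ ∈ H := by
  rw [Subgroup.mem_pointwise_smul_iff_inv_smul_mem]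
  simp [MulAut.smul_def]

end GroupStuff

lemma card_cosets {G : Type*} [Group G] [Finite G] (H : Subgroup G) (x : G) :
    Nat.card {C : RQ H // ∃ v ∈ H, C = rqmk H (x * v)} =
      Nat.card H / Nat.card (H ⊓ MulAut.conj x⁻¹ • H : Subgroup G) := by
  classical
  set K : Subgroup G := H ⊓ MulAut.conj x⁻¹ • H with hK
  have hKH : K ≤ H := inf_le_left
  set K' : Subgroup H := K.subgroupOf H with hK'
  have key : ∀ v w : H, (rqmk H (x * v) = rqmk H (x * w)) ↔ (QuotientGroup.rightRel K') v w := by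
    intro v w
    rw [rqmk_eq, QuotientGroup.rightRel_apply, Subgroup.mem_subgroupOf]
    have e : (x * (w : G)) * (x * (v : G))⁻¹ = x * ((w : G) * (v : G)⁻¹) * x⁻¹ := by group
    rw [e]
    simp only [hK, Subgroup.mem_inf, mem_conj_smul, Subgroup.coe_mul, Subgroup.coe_inv]
    exact ⟨fun h => ⟨mul_mem w.2 (inv_mem v.2), h⟩, fun h => h.2⟩
  let f : H → {C : RQ H // ∃ v ∈ H, C = rqmk H (x * v)} :=
    fun v => ⟨rqmk H (x * v), v, v.2, rfl⟩
  have hresp : ∀ v w : H, (QuotientGroup.rightRel K') v w → f v = f w :=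
    fun v w h => Subtype.ext ((key v w).2 h)
  let F := Quotient.lift f hresp
  have hinj : Function.Injective F := by
    intro a b
    induction a using Quotient.ind with
    | _ v =>
      induction b using Quotient.ind with
      | _ w =>
        intro h
        exact Quotient.sound ((key v w).1 (congrArg Subtype.val h))
  have hsurj : Function.Surjective F := by
    rintro ⟨C, v, hv, rfl⟩
    exact ⟨Quotient.mk _ ⟨v, hv⟩, rfl⟩
  have e1 : Nat.card {C : RQ H // ∃ v ∈ H, C = rqmk H (x * v)} =
      Nat.card (Quotient (QuotientGroup.rightRel K')) :=
    (Nat.card_congr (Equiv.ofBijective F ⟨hinj, hsurj⟩)).symm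
  have e2 : Nat.card (Quotient (QuotientGroup.rightRel K')) = Nat.card (H ⧸ K') :=
    Nat.card_congr (QuotientGroup.quotientRightRelEquivQuotientLeftRel K')
  have e3 : Nat.card (H ⧸ K') = K'.index := (Subgroup.index_eq_card K').symm
  have e4 : Nat.card K' * K'.index = Nat.card H := Subgroup.card_mul_index K'
  have e5 : Nat.card K' = Nat.card K := Nat.card_congr (Subgroup.subgroupOfEquivOfLe hKH).toEquiv
  have hpos : 0 < Nat.card K := Nat.card_pos
  rw [e1, e2, e3]
  exact (Nat.div_eq_of_eq_mul_left hpos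
    (by rw [← e5, mul_comm]; exact e4.symm)).symm

lemma dc_inv_self {G : Type*} [Group G] {H : Subgroup G} {x : G} (hx2 : x ^ 2 ∈ H)
    {g : G} (h : dc H x g) : dc H x g⁻¹ := by
  obtain ⟨u, hu, v, hv, rfl⟩ := h
  refine ⟨v⁻¹ * (x ^ 2)⁻¹, H.mul_mem (H.inv_mem hv) (H.inv_mem hx2), u⁻¹, H.inv_mem hu, ?_⟩
  group

lemma complement_unique_rep {G : Type*} [Group G] {H : Subgroup G} {T : Set G}
    (hc : Subgroup.IsComplement (H : Set G) T) (C : RQ H) :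
    ∃! t : G, t ∈ T ∧ rqmk H t = C := by
  obtain ⟨⟨⟨s, hs⟩, ⟨t, ht⟩⟩, hmul, huniq⟩ := hc.existsUnique C.out
  refine ⟨t, ⟨ht, ?_⟩, ?_⟩
  · rw [← Quotient.out_eq C, rqmk_eq, ← hmul]
    simpa using hs
  · rintro t' ⟨ht', hmk⟩
    rw [← Quotient.out_eq C, rqmk_eq] at hmk
    have := huniq ⟨⟨C.out * t'⁻¹, hmk⟩, ⟨t', ht'⟩⟩ (by simp)
    exact congrArg (fun p => (p.2 : G)) this

lemma forward_dir {G : Type*} [Group G] [Fintype G] (H : Subgroup G) (T : Set G)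
    (hc : Subgroup.IsComplement (H : Set G) T) (hTinv : T⁻¹ = T) (x : G) (hx2 : x ^ 2 ∈ H)
    (hodd : Odd (Nat.card H / Nat.card (H ⊓ MulAut.conj x⁻¹ • H : Subgroup G))) :
    ∃ h ∈ H, (h * x) ^ 2 = 1 := by
  classical
  let QD := {C : RQ H // ∃ v ∈ H, C = rqmk H (x * v)}
  have τspec : ∀ C : RQ H, (Classical.choose (complement_unique_rep hc C)) ∈ T ∧
      rqmk H (Classical.choose (complement_unique_rep hc C)) = C :=
    fun C => (Classical.choose_spec (complement_unique_rep hc C)).1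
  set τ : RQ H → G := fun C => Classical.choose (complement_unique_rep hc C) with hτ
  have τuniq : ∀ (C : RQ H) (t' : G), t' ∈ T → rqmk H t' = C → t' = τ C :=
    fun C t' h1 h2 => (Classical.choose_spec (complement_unique_rep hc C)).2 t' ⟨h1, h2⟩
  have hdcτ : ∀ C : QD, dc H x (τ C.1) := by
    rintro ⟨C, v, hv, rfl⟩
    exact dc_iff_mk.2 ⟨v, hv, (τspec _).2⟩
  have hinvT : ∀ t ∈ T, t⁻¹ ∈ T := by
    intro t ht
    rw [← hTinv]
    simpa using ht
  have hmemf : ∀ C : QD, ∃ v ∈ H, rqmk H ((τ C.1)⁻¹) = rqmk H (x * v) := by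
    intro C
    obtain ⟨v, hv, hmk⟩ := dc_iff_mk.1 (dc_inv_self hx2 (hdcτ C))
    exact ⟨v, hv, hmk⟩
  let f : QD → QD := fun C => ⟨rqmk H ((τ C.1)⁻¹), hmemf C⟩
  have hτf : ∀ C : QD, τ (f C).1 = (τ C.1)⁻¹ :=
    fun C => (τuniq _ _ (hinvT _ (τspec C.1).1) rfl).symm
  have hff : ∀ C : QD, f (f C) = C := by
    intro C
    refine Subtype.ext ?_
    show rqmk H ((τ (f C).1)⁻¹) = C.1
    rw [hτf C, inv_inv]
    exact (τspec C.1).2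
  have hoddQD : Odd (Nat.card QD) := by
    rw [show (QD : Type _) = {C : RQ H // ∃ v ∈ H, C = rqmk H (x * v)} from rfl,
      card_cosets H x]
    exact hodd
  obtain ⟨C, hC⟩ := odd_invol_fixed f hff hoddQD
  have : (τ C.1)⁻¹ = τ C.1 := by
    have h1 : rqmk H ((τ C.1)⁻¹) = C.1 := congrArg Subtype.val hC
    exact τuniq C.1 _ (hinvT _ (τspec C.1).1) h1
  have hsq : τ C.1 * τ C.1 = 1 := mul_eq_one_iff_inv_eq.2 this
  obtain ⟨u, hu, v, hv, ht⟩ := hdcτ C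
  refine ⟨v * u, H.mul_mem hv hu, ?_⟩
  have : (v * u * x) ^ 2 = v * (τ C.1 * τ C.1) * v⁻¹ := by
    rw [ht, pow_two]; group
  rw [this, hsq]
  group

lemma local_sym {G : Type*} [Group G] [Fintype G] (H : Subgroup G) (x : G) (hx2 : x ^ 2 ∈ H)
    (Hyp : Odd (Nat.card H / Nat.card (H ⊓ MulAut.conj x⁻¹ • H : Subgroup G)) →
      ∃ h ∈ H, (h * x) ^ 2 = 1) :
    ∃ r : G → G,
      (∀ g, (dc H x g ∨ dc H x g⁻¹) → rqmk H (r g) = rqmk H g) ∧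
      (∀ g g', rqmk H g = rqmk H g' → r g = r g') ∧
      (∀ g, (dc H x g ∨ dc H x g⁻¹) → r ((r g)⁻¹) = (r g)⁻¹) := by
  classical
  -- the set of right cosets contained in the double coset HxH
  set QD := {C : RQ H // ∃ v ∈ H, C = rqmk H (x * v)} with hQDdef
  have vspec : ∀ C : QD, ∃ v, v ∈ H ∧ C.1 = rqmk H (x * v) := by
    rintro ⟨C, v, hv, h⟩; exact ⟨v, hv, h⟩
  choose vf vfH vfmk using vspec
  let q₀ : QD := ⟨rqmk H (x * 1), 1, H.one_mem, rfl⟩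
  -- get a suitable involution on QD
  have hπ : ∃ π : QD → QD, (∀ C, π (π C) = C) ∧
      (∀ C, π C = C → ∃ y : G, y * y = 1 ∧ rqmk H y = C.1) := by
    rcases Nat.even_or_odd (Nat.card QD) with he | ho
    · obtain ⟨π, h1, h2⟩ := exists_invol_even he
      exact ⟨π, h1, fun C hC => absurd hC (h2 C)⟩
    · obtain ⟨π, h1, h2⟩ := exists_invol_odd ho q₀
      obtain ⟨h, hh, hsq⟩ := Hyp (by rw [← card_cosets H x]; exact ho)
      refine ⟨π, h1, fun C hC => ?_⟩
      have hCq : C = q₀ := (h2 C).1 hC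
      refine ⟨h * x, by rw [← pow_two]; exact hsq, ?_⟩
      rw [hCq]
      show rqmk H (h * x) = rqmk H (x * 1)
      rw [mul_one]
      exact rqmk_mul_left hh
  obtain ⟨π, hππ, hfix⟩ := hπ
  choose yfix hy1 hy2 using hfix
  have : Fintype QD := Fintype.ofFinite _
  let ind : QD → ℕ := fun C => ((Fintype.equivFin QD) C).val
  have indinj : Function.Injective ind := fun a b h =>
    (Fintype.equivFin QD).injective (Fin.ext h)
  -- representatives
  let t : QD → G := fun C =>
    if hC : π C = C then yfix C hC
    else if ind C < ind (π C) then (vf (π C))⁻¹ * x * vf C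
    else (vf (π C))⁻¹ * x⁻¹ * vf C
  have ht1 : ∀ C, rqmk H (t C) = C.1 := by
    intro C
    by_cases hC : π C = C
    · simp only [t, dif_pos hC]
      exact (hy2 C hC)
    · by_cases hlt : ind C < ind (π C)
      · simp only [t, dif_neg hC, if_pos hlt]
        have e : (vf (π C))⁻¹ * x * vf C = (vf (π C))⁻¹ * (x * vf C) := by group
        rw [e, rqmk_mul_left (H.inv_mem (vfH (π C))), ← vfmk C]
      · simp only [t, dif_neg hC, if_neg hlt]
        have e : (vf (π C))⁻¹ * x⁻¹ * vf C =
            ((vf (π C))⁻¹ * (x ^ 2)⁻¹) * (x * vf C) := by group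
        rw [e, rqmk_mul_left (H.mul_mem (H.inv_mem (vfH (π C))) (H.inv_mem hx2)), ← vfmk C]
  have ht2 : ∀ C, t (π C) = (t C)⁻¹ := by
    intro C
    by_cases hC : π C = C
    · rw [hC]
      simp only [t, dif_pos hC]
      exact eq_inv_of_mul_eq_one_left (hy1 C hC)
    · have hππC : π (π C) = C := hππ C
      have hπCne : ¬ π (π C) = π C := by rw [hππC]; exact fun h => hC h.symm
      by_cases hlt : ind C < ind (π C)
      · simp only [t, dif_neg hC, dif_neg hπCne, if_pos hlt, hππC]
        rw [if_neg (show ¬ ind (π C) < ind C by omega)]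
        group
      · have hne : ind C ≠ ind (π C) := fun h => hC (indinj h).symm
        simp only [t, dif_neg hC, dif_neg hπCne, if_neg hlt, hππC]
        rw [if_pos (show ind (π C) < ind C by omega)]
        group
  -- the choice function
  let R : RQ H → G := fun C =>
    if h : ∃ v ∈ H, C = rqmk H (x * v) then t ⟨C, h⟩ else C.out
  let r : G → G := fun g => R (rqmk H g)
  have hrel : ∀ g, (dc H x g ∨ dc H x g⁻¹) → dc H x g := by
    rintro g (h | h)
    · exact h
    · simpa using dc_inv_self hx2 h
  have hrt : ∀ g (h : ∃ v ∈ H, rqmk H g = rqmk H (x * v)), r g = t ⟨rqmk H g, h⟩ := by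
    intro g h
    simp only [r, R, dif_pos h]
  refine ⟨r, ?_, ?_, ?_⟩
  · intro g hg
    have hp : ∃ v ∈ H, rqmk H g = rqmk H (x * v) := dc_iff_mk.1 (hrel g hg)
    rw [hrt g hp, ht1 ⟨rqmk H g, hp⟩]
  · intro g g' h
    show R (rqmk H g) = R (rqmk H g')
    rw [h]
  · intro g hg
    have hp : ∃ v ∈ H, rqmk H g = rqmk H (x * v) := dc_iff_mk.1 (hrel g hg)
    set C : QD := ⟨rqmk H g, hp⟩ with hCdef
    rw [hrt g hp]
    have hinv : (t C)⁻¹ = t (π C) := (ht2 C).symm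
    have hmkinv : rqmk H ((t C)⁻¹) = (π C).1 := by rw [hinv, ht1]
    have hp2 : ∃ v ∈ H, rqmk H ((t C)⁻¹) = rqmk H (x * v) := by
      rw [hmkinv]; exact (π C).2
    rw [hrt _ hp2]
    have : (⟨rqmk H ((t C)⁻¹), hp2⟩ : QD) = π C := Subtype.ext hmkinv
    rw [this, ← hinv]

lemma mem_conj_smul' {G : Type*} [Group G] {H : Subgroup G} {y a : G} :
    a ∈ MulAut.conj y • H ↔ y⁻¹ * a * y ∈ H := by
  rw [Subgroup.mem_pointwise_smul_iff_inv_smul_mem]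
  simp [MulAut.smul_def, mul_assoc]

lemma card_inf_conj {G : Type*} [Group G] {H : Subgroup G} (x : G) :
    Nat.card (H ⊓ MulAut.conj x • H : Subgroup G) =
      Nat.card (H ⊓ MulAut.conj x⁻¹ • H : Subgroup G) := by
  refine Nat.card_congr ?_
  refine ⟨fun a => ⟨x⁻¹ * a * x, ?_⟩, fun b => ⟨x * b * x⁻¹, ?_⟩, ?_, ?_⟩
  · have h := a.2
    rw [Subgroup.mem_inf, mem_conj_smul'] at h
    rw [Subgroup.mem_inf, mem_conj_smul']
    refine ⟨h.2, ?_⟩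
    have e : (x⁻¹)⁻¹ * (x⁻¹ * (a : G) * x) * x⁻¹ = (a : G) := by group
    rw [e]
    exact h.1
  · have h := b.2
    rw [Subgroup.mem_inf, mem_conj_smul'] at h
    rw [Subgroup.mem_inf, mem_conj_smul']
    have e : (x⁻¹)⁻¹ * (b : G) * x⁻¹ = x * (b : G) * x⁻¹ := by group
    rw [e] at h
    refine ⟨h.2, ?_⟩
    have e2 : x⁻¹ * (x * (b : G) * x⁻¹) * x = (b : G) := by group
    rw [e2]
    exact h.1
  · intro a; ext; simp; group
  · intro b; ext; simp; group

lemma local_asym {G : Type*} [Group G] [Fintype G] (H : Subgroup G) (x : G)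
    (hasym : ¬ dc H x x⁻¹) :
    ∃ r : G → G,
      (∀ g, (dc H x g ∨ dc H x g⁻¹) → rqmk H (r g) = rqmk H g) ∧
      (∀ g g', rqmk H g = rqmk H g' → r g = r g') ∧
      (∀ g, (dc H x g ∨ dc H x g⁻¹) → r ((r g)⁻¹) = (r g)⁻¹) := by
  classical
  set QD := {C : RQ H // ∃ v ∈ H, C = rqmk H (x * v)} with hQDdef
  set QD' := {C : RQ H // ∃ v ∈ H, C = rqmk H (x⁻¹ * v)} with hQD'def
  have hcard : Nat.card QD = Nat.card QD' := by
    rw [hQDdef, hQD'def, card_cosets H x, card_cosets H x⁻¹]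
    simp only [inv_inv]
    rw [card_inf_conj x]
  have : Fintype QD := Fintype.ofFinite _
  have : Fintype QD' := Fintype.ofFinite _
  rw [Nat.card_eq_fintype_card, Nat.card_eq_fintype_card] at hcard
  let e : QD ≃ QD' := Fintype.equivOfCardEq hcard
  have vspec : ∀ C : QD, ∃ v, v ∈ H ∧ C.1 = rqmk H (x * v) := by
    rintro ⟨C, v, hv, h⟩; exact ⟨v, hv, h⟩
  choose vf vfH vfmk using vspec
  have uspec : ∀ C : QD', ∃ v, v ∈ H ∧ C.1 = rqmk H (x⁻¹ * v) := by
    rintro ⟨C, v, hv, h⟩; exact ⟨v, hv, h⟩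
  choose uf ufH ufmk using uspec
  let t : QD → G := fun C => (uf (e C))⁻¹ * x * vf C
  let t' : QD' → G := fun C' => (vf (e.symm C'))⁻¹ * x⁻¹ * uf C'
  have ht'inv : ∀ C : QD, t' (e C) = (t C)⁻¹ := by
    intro C
    show (vf (e.symm (e C)))⁻¹ * x⁻¹ * uf (e C) = ((uf (e C))⁻¹ * x * vf C)⁻¹
    rw [e.symm_apply_apply]
    group
  have ht1 : ∀ C : QD, rqmk H (t C) = C.1 := by
    intro C
    show rqmk H ((uf (e C))⁻¹ * x * vf C) = C.1
    have eq : (uf (e C))⁻¹ * x * vf C = (uf (e C))⁻¹ * (x * vf C) := by group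
    rw [eq, rqmk_mul_left (H.inv_mem (ufH (e C))), ← vfmk C]
  have ht1' : ∀ C' : QD', rqmk H (t' C') = C'.1 := by
    intro C'
    show rqmk H ((vf (e.symm C'))⁻¹ * x⁻¹ * uf C') = C'.1
    have eq : (vf (e.symm C'))⁻¹ * x⁻¹ * uf C' = (vf (e.symm C'))⁻¹ * (x⁻¹ * uf C') := by
      group
    rw [eq, rqmk_mul_left (H.inv_mem (vfH (e.symm C'))), ← ufmk C']
  -- the two families of cosets are disjoint
  have hdisj : ∀ C : RQ H, (∃ v ∈ H, C = rqmk H (x * v)) →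
      (∃ v ∈ H, C = rqmk H (x⁻¹ * v)) → False := by
    rintro C ⟨v, hv, rfl⟩ ⟨w, hw, hmk⟩
    rw [rqmk_eq] at hmk
    apply hasym
    refine ⟨x⁻¹ * w * (x * v)⁻¹, hmk, v * w⁻¹, H.mul_mem hv (H.inv_mem hw), ?_⟩
    group
  let R : RQ H → G := fun C =>
    if h : ∃ v ∈ H, C = rqmk H (x * v) then t ⟨C, h⟩
    else if h' : ∃ v ∈ H, C = rqmk H (x⁻¹ * v) then t' ⟨C, h'⟩ else C.out
  let r : G → G := fun g => R (rqmk H g)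
  have hrt : ∀ g (h : ∃ v ∈ H, rqmk H g = rqmk H (x * v)), r g = t ⟨rqmk H g, h⟩ := by
    intro g h
    simp only [r, R, dif_pos h]
  have hrt' : ∀ g (h' : ∃ v ∈ H, rqmk H g = rqmk H (x⁻¹ * v)), r g = t' ⟨rqmk H g, h'⟩ := by
    intro g h'
    have h : ¬ ∃ v ∈ H, rqmk H g = rqmk H (x * v) := fun h => hdisj _ h h'
    simp only [r, R, dif_neg h, dif_pos h']
  -- rel x g implies one of the coset conditions
  have hcase : ∀ g, (dc H x g ∨ dc H x g⁻¹) →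
      (∃ v ∈ H, rqmk H g = rqmk H (x * v)) ∨ (∃ v ∈ H, rqmk H g = rqmk H (x⁻¹ * v)) := by
    rintro g (h | h)
    · exact Or.inl (dc_iff_mk.1 h)
    · have : dc H x⁻¹ g := by simpa using dc_inv h
      exact Or.inr (dc_iff_mk.1 this)
  refine ⟨r, ?_, ?_, ?_⟩
  · intro g hg
    rcases hcase g hg with hp | hp
    · rw [hrt g hp, ht1 ⟨rqmk H g, hp⟩]
    · rw [hrt' g hp, ht1' ⟨rqmk H g, hp⟩]
  · intro g g' h
    show R (rqmk H g) = R (rqmk H g')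
    rw [h]
  · intro g hg
    rcases hcase g hg with hp | hp
    · set C : QD := ⟨rqmk H g, hp⟩ with hCdef
      rw [hrt g hp]
      have hinv : (t C)⁻¹ = t' (e C) := (ht'inv C).symm
      have hmkinv : rqmk H ((t C)⁻¹) = (e C).1 := by rw [hinv, ht1']
      have hp2 : ∃ v ∈ H, rqmk H ((t C)⁻¹) = rqmk H (x⁻¹ * v) := by
        rw [hmkinv]; exact (e C).2
      rw [hrt' _ hp2]
      have heq : (⟨rqmk H ((t C)⁻¹), hp2⟩ : QD') = e C := Subtype.ext hmkinv
      rw [heq, ← hinv]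
    · set C' : QD' := ⟨rqmk H g, hp⟩ with hCdef
      rw [hrt' g hp]
      have hinv : (t' C')⁻¹ = t (e.symm C') := by
        have := ht'inv (e.symm C')
        rw [e.apply_symm_apply] at this
        rw [this, inv_inv]
      have hmkinv : rqmk H ((t' C')⁻¹) = (e.symm C').1 := by rw [hinv, ht1]
      have hp2 : ∃ v ∈ H, rqmk H ((t' C')⁻¹) = rqmk H (x * v) := by
        rw [hmkinv]; exact (e.symm C').2
      rw [hrt _ hp2]
      have heq : (⟨rqmk H ((t' C')⁻¹), hp2⟩ : QD) = e.symm C' := Subtype.ext hmkinv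
      rw [heq, ← hinv]

lemma local_all {G : Type*} [Group G] [Fintype G] (H : Subgroup G)
    (Hyp : ∀ z : G, z ^ 2 ∈ H →
      Odd (Nat.card H / Nat.card (H ⊓ MulAut.conj z⁻¹ • H : Subgroup G)) →
      ∃ h ∈ H, (h * z) ^ 2 = 1) (x : G) :
    ∃ r : G → G,
      (∀ g, (dc H x g ∨ dc H x g⁻¹) → rqmk H (r g) = rqmk H g) ∧
      (∀ g g', rqmk H g = rqmk H g' → r g = r g') ∧
      (∀ g, (dc H x g ∨ dc H x g⁻¹) → r ((r g)⁻¹) = (r g)⁻¹) := by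
  by_cases hsym : dc H x x⁻¹
  · obtain ⟨u, hu, v, hv, hxinv⟩ := hsym
    set x' := x * v with hx'
    have hx'2 : x' ^ 2 ∈ H := by
      have e : x' ^ 2 = u⁻¹ * ((u * x * v) * x * v) := by rw [hx', pow_two]; group
      rw [e, ← hxinv]
      have e2 : u⁻¹ * (x⁻¹ * x * v) = u⁻¹ * v := by group
      rw [e2]
      exact H.mul_mem (H.inv_mem hu) hv
    have hdcxx' : dc H x x' := ⟨1, H.one_mem, v, hv, by rw [hx']; group⟩
    have hdcx'g : ∀ g, dc H x g → dc H x' g := fun g h => dc_trans (dc_symm hdcxx') h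
    obtain ⟨r, h1, h2, h3⟩ := local_sym H x' hx'2 (Hyp x' hx'2)
    refine ⟨r, fun g hg => h1 g ?_, h2, fun g hg => h3 g ?_⟩ <;>
      · rcases hg with h | h
        · exact Or.inl (hdcx'g _ h)
        · exact Or.inr (hdcx'g _ h)
  · exact local_asym H x hsym

theorem backward_dir {G : Type*} [Group G] [Fintype G] (H : Subgroup G)
    (Hyp : ∀ z : G, z ^ 2 ∈ H →
      Odd (Nat.card H / Nat.card (H ⊓ MulAut.conj z⁻¹ • H : Subgroup G)) →
      ∃ h ∈ H, (h * z) ^ 2 = 1) :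
    ∃ T : Set G, Subgroup.IsComplement (H : Set G) T ∧ T⁻¹ = T := by
  classical
  have hequiv : Equivalence (fun g g' : G => dc H g g' ∨ dc H g g'⁻¹) := by
    constructor
    · exact fun g => Or.inl (dc_refl g)
    · rintro g g' (h | h)
      · exact Or.inl (dc_symm h)
      · right
        have h2 := dc_inv (dc_symm h)
        simpa using h2
    · rintro g g' g'' (h1 | h1) (h2 | h2)
      · exact Or.inl (dc_trans h1 h2)
      · exact Or.inr (dc_trans h1 h2)
      · exact Or.inr (dc_trans h1 (dc_inv h2))
      · exact Or.inl (dc_trans h1 (by simpa using dc_inv h2))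
  let sr : Setoid G := ⟨_, hequiv⟩
  have main := fun x : G => local_all H Hyp x
  choose rloc rA rB rC using main
  let r : G → G := fun g => rloc (Quotient.mk sr g).out g
  have hout : ∀ g : G,
      dc H (Quotient.mk sr g).out g ∨ dc H (Quotient.mk sr g).out g⁻¹ := by
    intro g
    exact Quotient.exact ((Quotient.mk sr g).out_eq)
  have GA : ∀ g, rqmk H (r g) = rqmk H g := fun g => rA _ g (hout g)
  have hsr_of_mk : ∀ g g' : G, rqmk H g = rqmk H g' →
      (Quotient.mk sr g) = (Quotient.mk sr g') := by
    intro g g' h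
    rw [rqmk_eq] at h
    apply Quotient.sound
    exact Or.inl ⟨g' * g⁻¹, h, 1, H.one_mem, by group⟩
  have GB : ∀ g g', rqmk H g = rqmk H g' → r g = r g' := by
    intro g g' h
    show rloc (Quotient.mk sr g).out g = rloc (Quotient.mk sr g').out g'
    rw [← hsr_of_mk g g' h]
    exact rB (Quotient.mk sr g).out g g' h
  have GC : ∀ g, r ((r g)⁻¹) = (r g)⁻¹ := by
    intro g
    have hmk1 : Quotient.mk sr (r g) = Quotient.mk sr g := hsr_of_mk _ _ (GA g)
    have hmk2 : Quotient.mk sr ((r g)⁻¹) = Quotient.mk sr (r g) := by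
      apply Quotient.sound
      exact Or.inr (dc_refl ((r g)⁻¹))
    show rloc (Quotient.mk sr ((r g)⁻¹)).out ((r g)⁻¹) = (r g)⁻¹
    rw [hmk2, hmk1]
    exact rC (Quotient.mk sr g).out g (hout g)
  refine ⟨Set.range r, ?_, ?_⟩
  · rw [Subgroup.isComplement_iff_existsUnique]
    intro g
    have hmemH : g * (r g)⁻¹ ∈ (H : Set G) := by
      rw [SetLike.mem_coe, ← rqmk_eq]
      exact GA g
    refine ⟨⟨⟨g * (r g)⁻¹, hmemH⟩, ⟨r g, Set.mem_range_self g⟩⟩, by simp, ?_⟩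
    rintro ⟨⟨s, hs⟩, ⟨tt, htt⟩⟩ hprod
    obtain ⟨b, rfl⟩ := htt
    simp only at hprod
    have h1 : rqmk H (r b) = rqmk H g := by
      rw [rqmk_eq, ← hprod]
      have e : s * r b * (r b)⁻¹ = s := by group
      rw [e]
      exact hs
    have hr : r b = r g := by
      have h2 : r (r b) = r g := GB _ _ h1
      have h3 : r (r b) = r b := GB _ _ (GA b)
      rw [← h3, h2]
    have hts : s = g * (r g)⁻¹ := by
      rw [← hr, ← hprod]
      group
    refine Prod.ext (Subtype.ext ?_) (Subtype.ext ?_)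
    · exact hts
    · exact hr
  · ext a
    simp only [Set.mem_inv]
    have key : ∀ a : G, a⁻¹ ∈ Set.range r → a ∈ Set.range r := by
      rintro a ⟨b, hb⟩
      refine ⟨(r b)⁻¹, ?_⟩
      rw [GC b, hb, inv_inv]
    constructor
    · intro h
      exact key a h
    · intro h
      exact key a⁻¹ (by simpa using h)

theorem stmt_8 {G : Type*} [Group G] [Fintype G] (H : Subgroup G) :
    (∃ T : Set G, Subgroup.IsComplement (H : Set G) T ∧ T⁻¹ = T) ↔
      ∀ x : G, x ^ 2 ∈ H →
        Odd (Nat.card H / Nat.card (H ⊓ MulAut.conj x⁻¹ • H : Subgroup G)) →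
        ∃ h ∈ H, (h * x) ^ 2 = 1 := by
  constructor
  · rintro ⟨T, hc, hTinv⟩ x hx2 hodd
    exact forward_dir H T hc hTinv x hx2 hodd
  · intro Hyp
    exact backward_dir H Hyp
end

section
/- Let G be a finite 2-group with a unique element of order 2. Then no subgroup H with 1 < H < G is a subgroup perfect code of G, i.e., no proper nontrivial subgroup admits an inverse-closed right transversal. -/
/-!
Let `T` be an inverse-closed right transversal of `H`. Inversion is an involution of `T`, so the
number of self-inverse elements of `T` has the parity of `|T| = [G : H]`, which is even since
`H < G` in a 2-group. But `H ≠ 1` contains the unique involution of `G`, so every self-inverse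
element of `G` lies in `H`, and `T` meets `H` in exactly one element: `T` has exactly one
self-inverse element, a contradiction.
-/

open Function in
theorem Function.Involutive.card_fixedPoints_modEq_two {α : Type*} [Finite α] {f : α → α}
    (hf : Involutive f) : Nat.card α ≡ Nat.card (fixedPoints f) [MOD 2] := by
  classical
  have := Fintype.ofFinite α
  have : Fact (Nat.Prime 2) := ⟨Nat.prime_two⟩
  have hf2 : (show Function.End α from f) ^ 2 ^ 1 = 1 := funext hf
  simpa only [Nat.card_eq_fintype_card] using Equiv.Perm.card_fixedPoints_modEq hf2

theorem Set.odd_card_of_existsUnique_inv_eq_self {α : Type*} [InvolutiveInv α] {s : Set α}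
    [Finite s] (hs : s⁻¹ = s) (h : ∃! a ∈ s, a⁻¹ = a) : Odd (Nat.card s) := by
  obtain ⟨a, ⟨has, ha⟩, huniq⟩ := h
  let f : s → s := fun b => ⟨(b : α)⁻¹, hs.subset (Set.inv_mem_inv.mpr b.2)⟩
  have hf : Function.Involutive f := fun b => Subtype.ext (inv_inv (b : α))
  have hfix : Nat.card (Function.fixedPoints f) = 1 := by
    refine Nat.card_eq_one_iff_exists.mpr ⟨⟨⟨a, has⟩, Subtype.ext ha⟩, ?_⟩
    rintro ⟨⟨b, hbs⟩, hb⟩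
    exact Subtype.ext (Subtype.ext (huniq b ⟨hbs, congrArg Subtype.val hb⟩))
  rw [Nat.odd_iff, hf.card_fixedPoints_modEq_two, hfix]

theorem Subgroup.IsComplement.existsUnique_mem {G : Type*} [Group G] {H : Subgroup G}
    {T : Set G} (hc : IsComplement (H : Set G) T) : ∃! t ∈ T, t ∈ H := by
  obtain ⟨⟨t, htT⟩, ht, huniq⟩ := isComplement_iff_existsUnique_mul_inv_mem.mp hc 1
  refine ⟨t, ⟨htT, by simpa using ht⟩, fun s ⟨hsT, hsH⟩ => ?_⟩
  exact congrArg Subtype.val (huniq ⟨s, hsT⟩ (by simpa using hsH))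

theorem Subgroup.IsComplement.existsUnique_inv_eq_self {G : Type*} [Group G] {H : Subgroup G}
    {T : Set G} (hc : IsComplement (H : Set G) T) (hT : T⁻¹ = T)
    (hH : ∀ g : G, g⁻¹ = g → g ∈ H) : ∃! t ∈ T, t⁻¹ = t := by
  obtain ⟨t, ⟨htT, htH⟩, huniq⟩ := hc.existsUnique_mem
  have ht : t⁻¹ = t := huniq _ ⟨hT.subset (Set.inv_mem_inv.mpr htT), H.inv_mem htH⟩
  exact ⟨t, ⟨htT, ht⟩, fun s ⟨hsT, hs⟩ => huniq s ⟨hsT, hH s hs⟩⟩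

theorem IsPGroup.exists_mem_orderOf_eq_prime {G : Type*} [Group G] [Finite G] {p : ℕ}
    [Fact p.Prime] {H : Subgroup G} (hH : IsPGroup p H) (hbot : H ≠ ⊥) :
    ∃ x ∈ H, orderOf x = p := by
  have hdvd : p ∣ Nat.card H :=
    hH.card_eq_or_dvd.resolve_left (mt Subgroup.card_eq_one.mp hbot)
  obtain ⟨x, hx⟩ := exists_prime_orderOf_dvd_card' p hdvd
  exact ⟨x, x.2, by rw [Subgroup.orderOf_coe, hx]⟩

theorem IsPGroup.dvd_index {G : Type*} [Group G] [Finite G] {p : ℕ} [Fact p.Prime]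
    (hG : IsPGroup p G) {H : Subgroup G} (htop : H ≠ ⊤) : p ∣ H.index := by
  obtain ⟨n, hn⟩ := hG.index H
  have hn0 : n ≠ 0 := by
    rintro rfl
    exact htop (Subgroup.index_eq_one.mp (by simpa using hn))
  exact hn ▸ dvd_pow_self p hn0

theorem Subgroup.mem_of_inv_eq_self_of_unique_involution {G : Type*} [Group G]
    (huniq : ∃! x : G, x ≠ 1 ∧ x ^ 2 = 1) {H : Subgroup G} {x : G} (hxH : x ∈ H)
    (hx : orderOf x = 2) {g : G} (hg : g⁻¹ = g) : g ∈ H := by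
  rcases eq_or_ne g 1 with rfl | hg1
  · exact H.one_mem
  · have hg2 : g ^ 2 = 1 := by rw [sq, mul_eq_one_iff_eq_inv, hg]
    obtain ⟨hx2, hx1⟩ := orderOf_eq_prime_iff.mp hx
    exact huniq.unique ⟨hx1, hx2⟩ ⟨hg1, hg2⟩ ▸ hxH

theorem stmt_10 {G : Type*} [Group G] [Fintype G]
    (h2 : IsPGroup 2 G) (huniq : ∃! x : G, x ≠ 1 ∧ x ^ 2 = 1)
    (H : Subgroup G) (hbot : H ≠ ⊥) (htop : H ≠ ⊤) :
    ¬ ∃ T : Set G, Subgroup.IsComplement (H : Set G) T ∧ T⁻¹ = T := by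
  have : Fact (Nat.Prime 2) := ⟨Nat.prime_two⟩
  rintro ⟨T, hc, hT⟩
  obtain ⟨x, hxH, hx⟩ := (h2.to_subgroup H).exists_mem_orderOf_eq_prime hbot
  have hodd : Odd (Nat.card T) := Set.odd_card_of_existsUnique_inv_eq_self hT <|
    hc.existsUnique_inv_eq_self hT fun _ =>
      Subgroup.mem_of_inv_eq_self_of_unique_involution huniq hxH hx
  have heven : Even (Nat.card T) := even_iff_two_dvd.mpr (hc.card_right ▸ h2.dvd_index htop)
  exact Nat.not_even_iff_odd.mpr hodd heven
end

section
/- Let G be a finite group of even order. Then G has a subgroup H with 1 < H which is a 2-group with a unique involution (i.e., cyclic or generalized quaternion) and which is a subgroup perfect code of G (admits an inverse-closed right transversal). -/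
/-!
Take `H` maximal among the 2-subgroups with a unique involution (by Cauchy, `⟨a⟩` for an
involution `a` is one). If `x` normalizes `H` and `x² ∈ H` but no element of `xH` squares to `1`,
then `H ∪ xH` is a larger such subgroup; so every such coset `xH` contains an element `t` with
`t² = 1`.

An inverse-closed transversal is then assembled from the `H`-orbits on `G ⧸ H`, one pair
`{orbit xH, orbit x⁻¹H}` at a time. These two orbits have the same size, a power of `2`, and any
coset `a` of the first and `b` of the second are `a = yH`, `b = y⁻¹H` for a single `y`. So the two
orbits are matched by pairs `{y, y⁻¹}` when they differ; when they coincide and have even size, the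
orbit is split into halves which are matched. What remains is an orbit `{xH} = {x⁻¹H}` of size
one: then `x` normalizes `H`, `x² ∈ H`, and the element `t` above represents `xH` on its own.
-/

open MulAction QuotientGroup

namespace Set

variable {ι α β : Type*} {f : α → β}

theorem BijOn.union_of_disjoint {s₁ s₂ : Set α} {t₁ t₂ : Set β} (h₁ : BijOn f s₁ t₁)
    (h₂ : BijOn f s₂ t₂) (ht : Disjoint t₁ t₂) : BijOn f (s₁ ∪ s₂) (t₁ ∪ t₂) := by
  refine h₁.union h₂ ((injOn_union ((ht.preimage f).mono h₁.mapsTo h₂.mapsTo)).mpr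
    ⟨h₁.injOn, h₂.injOn, fun x hx y hy hxy => ?_⟩)
  exact disjoint_left.mp ht (h₁.mapsTo hx) (hxy ▸ h₂.mapsTo hy)

theorem bijOn_range_of_apply_eq {g : ι → α} {t : Set β} (e : ι ≃ t) (h : ∀ i, f (g i) = e i) :
    BijOn f (range g) t := by
  refine ⟨?_, ?_, fun b hb =>
    ⟨g (e.symm ⟨b, hb⟩), mem_range_self _, by rw [h, e.apply_symm_apply]⟩⟩
  · rintro _ ⟨i, rfl⟩
    exact h i ▸ (e i).2
  · rintro _ ⟨i, rfl⟩ _ ⟨j, rfl⟩ hij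
    rw [h, h] at hij
    rw [e.injective (Subtype.ext hij)]

end Set

theorem isPGroup_zpowers_of_orderOf_eq_two {G : Type*} [Group G] {a : G} (ha : orderOf a = 2) :
    IsPGroup 2 (Subgroup.zpowers a) :=
  IsPGroup.of_card (n := 1) (by rw [Nat.card_zpowers, ha, pow_one])

theorem eq_of_mem_zpowers_of_orderOf_eq_two {G : Type*} [Group G] [Finite G] {a y : G}
    (ha : orderOf a = 2) (hy : y ∈ Subgroup.zpowers a) (hy1 : y ≠ 1) : y = a := by
  classical
  obtain ⟨k, hk, rfl⟩ : ∃ k ≤ 1, a ^ k = y := by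
    simpa [mem_zpowers_iff_mem_range_orderOf, ha, Nat.lt_succ_iff] using hy
  interval_cases k
  · exact absurd (pow_zero a) hy1
  · exact pow_one a

namespace Subgroup

variable {G : Type*} [Group G] (H : Subgroup G)

/-- Stated with left cosets; for `S = univ` an inverse-closed `T` is then also a right
transversal, as inversion exchanges left and right cosets. -/
def HasInvClosedTransversal (S : Set (G ⧸ H)) : Prop :=
  ∃ T : Set G, T⁻¹ = T ∧ Set.BijOn ((↑) : G → G ⧸ H) T S

variable {H}

theorem hasInvClosedTransversal_empty : H.HasInvClosedTransversal ∅ :=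
  ⟨∅, Set.inv_empty, Set.bijOn_empty _⟩

theorem hasInvClosedTransversal_singleton {t : G} (ht : t ^ 2 = 1) :
    H.HasInvClosedTransversal {(t : G ⧸ H)} := by
  refine ⟨{t}, ?_, Set.bijOn_singleton.mpr rfl⟩
  rw [Set.inv_singleton, inv_eq_of_mul_eq_one_right (by rwa [← sq])]

theorem HasInvClosedTransversal.union {S₁ S₂ : Set (G ⧸ H)} (h₁ : H.HasInvClosedTransversal S₁)
    (h₂ : H.HasInvClosedTransversal S₂) (hS : Disjoint S₁ S₂) :
    H.HasInvClosedTransversal (S₁ ∪ S₂) := by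
  obtain ⟨T₁, hT₁, hb₁⟩ := h₁
  obtain ⟨T₂, hT₂, hb₂⟩ := h₂
  exact ⟨T₁ ∪ T₂, by rw [Set.union_inv, hT₁, hT₂], hb₁.union_of_disjoint hb₂ hS⟩

theorem hasInvClosedTransversal_union_of_equiv {A B : Set (G ⧸ H)} (hAB : Disjoint A B)
    (e : A ≃ B) (hpair : ∀ a : A, ∃ y : G, (y : G ⧸ H) = a ∧ ((y⁻¹ : G) : G ⧸ H) = e a) :
    H.HasInvClosedTransversal (A ∪ B) := by
  choose y hyA hyB using hpair
  refine ⟨Set.range y ∪ Set.range fun a => (y a)⁻¹, ?_,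
    (Set.bijOn_range_of_apply_eq (Equiv.refl A) hyA).union_of_disjoint
      (Set.bijOn_range_of_apply_eq e hyB) hAB⟩
  ext g
  simp only [Set.mem_inv, Set.mem_union, Set.mem_range, inv_eq_iff_eq_inv, inv_inv,
    eq_comm (b := g⁻¹), eq_comm (b := g)]
  tauto

open DoubleCoset in
theorem mk_mem_orbit_iff {g x : G} :
    (g : G ⧸ H) ∈ orbit H (x : G ⧸ H) ↔ g ∈ doubleCoset x H H := by
  change (∃ h : H, ((h * x : G) : G ⧸ H) = g) ↔ _
  simp only [QuotientGroup.eq, mem_doubleCoset, Subtype.exists, exists_prop]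
  constructor
  · rintro ⟨h, hh, hg⟩
    exact ⟨h, hh, _, hg, by group⟩
  · rintro ⟨h₁, hh₁, h₂, hh₂, rfl⟩
    exact ⟨h₁, hh₁, by simpa [mul_assoc] using hh₂⟩

theorem inv_mk_mem_orbit_inv_iff {g x : G} :
    ((g⁻¹ : G) : G ⧸ H) ∈ orbit H ((x⁻¹ : G) : G ⧸ H) ↔ (g : G ⧸ H) ∈ orbit H (x : G ⧸ H) := by
  simp only [mk_mem_orbit_iff, DoubleCoset.mem_doubleCoset]
  constructor <;> rintro ⟨h₁, hh₁, h₂, hh₂, hg⟩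
  · exact ⟨h₂⁻¹, H.inv_mem hh₂, h₁⁻¹, H.inv_mem hh₁, by rw [← inv_inv g, hg]; group⟩
  · exact ⟨h₂⁻¹, H.inv_mem hh₂, h₁⁻¹, H.inv_mem hh₁, by rw [hg]; group⟩

theorem exists_mk_eq_and_mk_inv_eq {x : G} {a b : G ⧸ H} (ha : a ∈ orbit H (x : G ⧸ H))
    (hb : b ∈ orbit H ((x⁻¹ : G) : G ⧸ H)) :
    ∃ y : G, (y : G ⧸ H) = a ∧ ((y⁻¹ : G) : G ⧸ H) = b := by
  obtain ⟨h₁, rfl⟩ := ha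
  obtain ⟨h₂, rfl⟩ := hb
  refine ⟨h₁ * x * (h₂ : G)⁻¹, mk_mul_of_mem _ (H.inv_mem h₂.2), ?_⟩
  rw [mul_inv_rev, mul_inv_rev, inv_inv, ← mul_assoc]
  exact mk_mul_of_mem _ (H.inv_mem h₁.2)

theorem card_orbit_inv [Finite H] (x : G) :
    Nat.card (orbit H ((x⁻¹ : G) : G ⧸ H)) = Nat.card (orbit H (x : G ⧸ H)) := by
  have hpre : ((↑) : G → G ⧸ H) ⁻¹' orbit H ((x⁻¹ : G) : G ⧸ H) =
      (((↑) : G → G ⧸ H) ⁻¹' orbit H (x : G ⧸ H))⁻¹ := by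
    ext g
    rw [Set.mem_inv, Set.mem_preimage, Set.mem_preimage, ← inv_mk_mem_orbit_inv_iff, inv_inv]
  have h := card_preimage_mk H (orbit H ((x⁻¹ : G) : G ⧸ H))
  rw [hpre, Nat.card_coe_set_eq, Set.ncard_inv, ← Nat.card_coe_set_eq,
    card_preimage_mk] at h
  exact (Nat.eq_of_mul_eq_mul_left Nat.card_pos h).symm

theorem hasInvClosedTransversal_orbit_union_orbit_inv [Finite H] (hH : IsPGroup 2 H)
    (hN : ∀ x ∈ normalizer (H : Set G), x ^ 2 ∈ H → ∃ t : G, (t : G ⧸ H) = x ∧ t ^ 2 = 1) (x : G) :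
    H.HasInvClosedTransversal (orbit H (x : G ⧸ H) ∪ orbit H ((x⁻¹ : G) : G ⧸ H)) := by
  have (q : G ⧸ H) : Finite (orbit H q) := (Finite.finite_mulAction_orbit q).to_subtype
  rcases orbit.eq_or_disjoint (G := H) (x : G ⧸ H) ((x⁻¹ : G) : G ⧸ H) with horb | hdisj
  · rw [← horb, Set.union_self]
    obtain ⟨n, hn⟩ := hH.card_orbit (x : G ⧸ H)
    rw [Nat.card_coe_set_eq] at hn
    cases n with
    | zero =>
      obtain ⟨q, hq⟩ := Set.ncard_eq_one.mp hn
      have hxq : (x : G ⧸ H) = q := Set.mem_singleton_iff.mp (hq ▸ mem_orbit_self _)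
      have hxN : x ∈ normalizer (H : Set G) :=
        Sylow.mem_fixedPoints_mul_left_cosets_iff_mem_normalizer.mp
          (subsingleton_orbit_iff_mem_fixedPoints.mp (hq ▸ Set.subsingleton_singleton))
      have hx2 : x ^ 2 ∈ H := by
        have hinv : ((x⁻¹ : G) : G ⧸ H) = q := by
          rw [← Set.mem_singleton_iff, ← hq, horb]; exact mem_orbit_self _
        rw [← hxq, QuotientGroup.eq, inv_inv, ← sq] at hinv
        exact hinv
      obtain ⟨t, htx, ht⟩ := hN x hxN hx2
      rw [hq, ← hxq, ← htx]
      exact hasInvClosedTransversal_singleton ht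
    | succ n =>
      obtain ⟨A, hAO, hA⟩ := Set.exists_subset_card_eq (n := 2 ^ n)
        (s := orbit H (x : G ⧸ H)) (by rw [hn, pow_succ]; omega)
      have : Finite A := Finite.Set.subset _ hAO
      have hB : (orbit H (x : G ⧸ H) \ A).ncard = 2 ^ n := by
        rw [Set.ncard_sdiff hAO, hn, hA, pow_succ]; omega
      obtain ⟨e⟩ := Finite.card_eq.mp (by rw [Nat.card_coe_set_eq, Nat.card_coe_set_eq, hA, hB] :
        Nat.card A = Nat.card ↥(orbit H (x : G ⧸ H) \ A))
      rw [← Set.union_sdiff_cancel hAO]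
      exact hasInvClosedTransversal_union_of_equiv Set.disjoint_sdiff_right e
        fun a => exists_mk_eq_and_mk_inv_eq (hAO a.2) (horb ▸ (e a).2.1)
  · obtain ⟨e⟩ := Finite.card_eq.mp (card_orbit_inv (H := H) x).symm
    exact hasInvClosedTransversal_union_of_equiv hdisj e
      fun a => exists_mk_eq_and_mk_inv_eq a.2 (e a).2

theorem hasInvClosedTransversal_of_invariant [Finite G] (hH : IsPGroup 2 H)
    (hN : ∀ x ∈ normalizer (H : Set G), x ^ 2 ∈ H → ∃ t : G, (t : G ⧸ H) = x ∧ t ^ 2 = 1)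
    (S : Set (G ⧸ H)) (hsmul : ∀ h : H, ∀ q ∈ S, h • q ∈ S)
    (hinv : ∀ g : G, (g : G ⧸ H) ∈ S → ((g⁻¹ : G) : G ⧸ H) ∈ S) :
    H.HasInvClosedTransversal S := by
  induction hn : S.ncard using Nat.strong_induction_on generalizing S with
  | _ n ih =>
  rcases S.eq_empty_or_nonempty with rfl | ⟨q, hq⟩
  · exact hasInvClosedTransversal_empty
  obtain ⟨x, rfl⟩ := QuotientGroup.mk_surjective q
  set E := orbit H (x : G ⧸ H) ∪ orbit H ((x⁻¹ : G) : G ⧸ H) with hE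
  have hE_smul (h : H) (q : G ⧸ H) : h • q ∈ E ↔ q ∈ E := by
    simp only [hE, Set.mem_union, ← orbit_eq_iff, orbit_smul]
  have hE_inv (g : G) : ((g⁻¹ : G) : G ⧸ H) ∈ E ↔ (g : G ⧸ H) ∈ E := by
    have h := inv_mk_mem_orbit_inv_iff (H := H) (g := g⁻¹) (x := x)
    rw [inv_inv] at h
    rw [hE, Set.mem_union, Set.mem_union, inv_mk_mem_orbit_inv_iff, ← h, or_comm]
  have hES : E ⊆ S := by
    rintro _ (⟨h, rfl⟩ | ⟨h, rfl⟩)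
    · exact hsmul h _ hq
    · exact hsmul h _ (hinv x hq)
  rw [← Set.union_sdiff_cancel hES]
  refine (hasInvClosedTransversal_orbit_union_orbit_inv hH hN x).union
    (ih _ ?_ _ ?_ ?_ rfl) Set.disjoint_sdiff_right
  · exact hn ▸ Set.ncard_lt_ncard
      (Set.sdiff_ssubset_left_iff.mpr ⟨_, hq, Or.inl (mem_orbit_self _)⟩)
  · exact fun h q hq => ⟨hsmul h q hq.1, (hE_smul h q).not.mpr hq.2⟩
  · exact fun g hg => ⟨hinv g hg.1, (hE_inv g).not.mpr hg.2⟩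

theorem HasInvClosedTransversal.exists_isComplement (h : H.HasInvClosedTransversal Set.univ) :
    ∃ T : Set G, IsComplement (H : Set G) T ∧ T⁻¹ = T := by
  obtain ⟨T, hT, hb⟩ := h
  refine ⟨T, isComplement_iff_existsUnique_mul_inv_mem.mpr fun g => ?_, hT⟩
  have hmem {t : G} (ht : t ∈ T) : t⁻¹ ∈ T := by rwa [← hT, Set.inv_mem_inv]
  have key (t : G) : g * t⁻¹ ∈ H ↔ ((t⁻¹ : G) : G ⧸ H) = ((g⁻¹ : G) : G ⧸ H) := by
    rw [QuotientGroup.eq, ← inv_mem_iff, mul_inv_rev, inv_inv]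
  obtain ⟨s, hs, hsg⟩ := hb.surjOn (Set.mem_univ ((g⁻¹ : G) : G ⧸ H))
  refine ⟨⟨s⁻¹, hmem hs⟩, (key _).mpr (by rwa [inv_inv]), fun t ht => Subtype.ext ?_⟩
  rw [← inv_inv (t : G), hb.injOn (hmem t.2) hs (((key t).mp ht).trans hsg.symm)]

section AdjoinSqRoot

variable {x : G} (hxN : x ∈ normalizer (H : Set G)) (hx2 : x ^ 2 ∈ H)

def adjoinSqRoot : Subgroup G where
  carrier := {g | g ∈ H ∨ x⁻¹ * g ∈ H}
  one_mem' := Or.inl H.one_mem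
  mul_mem' := by
    have hconj {h : G} (hh : h ∈ H) : x⁻¹ * h * x ∈ H := (mem_normalizer_iff''.mp hxN h).mp hh
    rintro a b (ha | ha) (hb | hb)
    · exact Or.inl (H.mul_mem ha hb)
    · exact Or.inr (by simpa [mul_assoc] using H.mul_mem (hconj ha) hb)
    · exact Or.inr (by simpa [mul_assoc] using H.mul_mem ha hb)
    · refine Or.inl ?_
      have := H.mul_mem (H.mul_mem hx2 (hconj ha)) hb
      simpa [sq, mul_assoc] using this
  inv_mem' := by
    rintro a (ha | ha)
    · exact Or.inl (H.inv_mem ha)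
    · refine Or.inr ?_
      have := H.mul_mem ((mem_normalizer_iff''.mp hxN _).mp (H.inv_mem ha)) (H.inv_mem hx2)
      simpa [sq, mul_assoc] using this

theorem le_adjoinSqRoot : H ≤ adjoinSqRoot hxN hx2 := fun _ => Or.inl

theorem mem_adjoinSqRoot_self : x ∈ adjoinSqRoot hxN hx2 := Or.inr (by simp [H.one_mem])

theorem sq_mem_of_mem_adjoinSqRoot {g : G} (hg : g ∈ adjoinSqRoot hxN hx2) : g ^ 2 ∈ H := by
  rcases hg with hg | hg
  · exact H.pow_mem hg 2
  · have e : g ^ 2 = x ^ 2 * (x⁻¹ * (x⁻¹ * g) * x) * (x⁻¹ * g) := by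
      simp only [sq, mul_assoc, mul_inv_cancel_left]
    rw [e]
    exact H.mul_mem (H.mul_mem hx2 ((mem_normalizer_iff''.mp hxN _).mp hg)) hg

theorem isPGroup_adjoinSqRoot (hH : IsPGroup 2 H) : IsPGroup 2 (adjoinSqRoot hxN hx2) := by
  intro g
  obtain ⟨k, hk⟩ := hH ⟨_, sq_mem_of_mem_adjoinSqRoot hxN hx2 g.2⟩
  refine ⟨k + 1, Subtype.ext ?_⟩
  simpa [pow_succ', pow_mul] using congrArg Subtype.val hk

end AdjoinSqRoot

theorem exists_mk_eq_sq_eq_one_of_maximal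
    (hmax : Maximal (fun K : Subgroup G => IsPGroup 2 K ∧ ∃! y : G, y ∈ K ∧ y ≠ 1 ∧ y ^ 2 = 1) H)
    {x : G} (hxN : x ∈ normalizer (H : Set G)) (hx2 : x ^ 2 ∈ H) :
    ∃ t : G, (t : G ⧸ H) = x ∧ t ^ 2 = 1 := by
  by_contra! hno
  have hxH : x ∉ H := fun hx => hno 1 (QuotientGroup.eq.mpr (by simpa using hx)) (one_pow 2)
  obtain ⟨z, hz, hz_unique⟩ := hmax.1.2
  have hM_le : adjoinSqRoot hxN hx2 ≤ H := by
    refine hmax.2 ⟨isPGroup_adjoinSqRoot hxN hx2 hmax.1.1, z, ⟨le_adjoinSqRoot hxN hx2 hz.1, hz.2⟩,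
      fun y ⟨hyM, hy1, hy2⟩ => hz_unique y ⟨?_, hy1, hy2⟩⟩ (le_adjoinSqRoot hxN hx2)
    refine hyM.resolve_right fun hy => hno y (QuotientGroup.eq.mpr ?_) hy2
    simpa using H.inv_mem hy
  exact hxH (hM_le (mem_adjoinSqRoot_self hxN hx2))

end Subgroup

open Subgroup

theorem stmt_12 {G : Type*} [Group G] [Fintype G] (heven : Even (Nat.card G)) :
    ∃ H : Subgroup G, ⊥ < H ∧ IsPGroup 2 H ∧
      (∃! x : G, x ∈ H ∧ x ≠ 1 ∧ x ^ 2 = 1) ∧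
      ∃ T : Set G, Subgroup.IsComplement (H : Set G) T ∧ T⁻¹ = T := by
  have : Fact (Nat.Prime 2) := ⟨Nat.prime_two⟩
  obtain ⟨a, ha⟩ := exists_prime_orderOf_dvd_card' 2 heven.two_dvd
  have ha2 : a ^ 2 = 1 := ha ▸ pow_orderOf_eq_one a
  obtain ⟨H, -, hmax⟩ := (Set.toFinite
    {K : Subgroup G | IsPGroup 2 K ∧ ∃! y : G, y ∈ K ∧ y ≠ 1 ∧ y ^ 2 = 1}).exists_le_maximal
    (a := zpowers a) ⟨isPGroup_zpowers_of_orderOf_eq_two ha, a,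
      ⟨mem_zpowers a, fun h => by simp [h] at ha, ha2⟩,
      fun y ⟨hy, hy1, _⟩ => eq_of_mem_zpowers_of_orderOf_eq_two ha hy hy1⟩
  obtain ⟨T, hT, hTinv⟩ := (hasInvClosedTransversal_of_invariant hmax.1.1
    (fun x hxN hx2 => exists_mk_eq_sq_eq_one_of_maximal hmax hxN hx2) Set.univ
    (fun _ _ _ => Set.mem_univ _) (fun _ _ => Set.mem_univ _)).exists_isComplement
  obtain ⟨z, ⟨hz, hz1, -⟩, -⟩ := hmax.1.2
  exact ⟨H, SetLike.lt_iff_le_and_exists.mpr ⟨bot_le, z, hz, by simpa using hz1⟩, hmax.1.1,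
    hmax.1.2, T, hT, hTinv⟩
end

section
/- Let G be a finite group that is not a p-group for a single prime (i.e., |π(G)| ≥ 2). Then the number of conjugacy classes of nontrivial proper subgroup perfect codes of G is at least |π(G)|, the number of distinct prime divisors of |G|. -/
open Pointwise

/-- `H` is a subgroup perfect code of `G`: it admits an inverse-closed right transversal. -/
def IsPerfectCode {G : Type*} [Group G] (H : Subgroup G) : Prop :=
  ∃ T : Set G, Subgroup.IsComplement (H : Set G) T ∧ T⁻¹ = T

/-- The nontrivial proper subgroup perfect codes of `G`. -/
def NontrivialProperPerfectCode (G : Type*) [Group G] : Type _ :=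
  {H : Subgroup G // H ≠ ⊥ ∧ H ≠ ⊤ ∧ IsPerfectCode H}

/-- Conjugacy classes of nontrivial proper subgroup perfect codes of `G`. -/
def PerfectCodeConjClasses (G : Type*) [Group G] : Type _ :=
  Quot (fun H K : NontrivialProperPerfectCode G => ∃ g : G, MulAut.conj g • H.1 = K.1)

/-!
A subgroup `H` of odd order or odd index is a perfect code. For an inverse-closed set, being a
right or a left transversal of `H` is the same, so we look for an inverse-closed set meeting each
left coset once. Call `uH` and `vH` adjacent when some `t ∈ uH` has `t⁻¹ ∈ vH`, that is, when
`HvH = (HuH)⁻¹`: such a set is a perfect matching of the cosets, in which a coset may be matched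
with itself only through some `t = t⁻¹`. The cosets in `HgH` are as many as those in `Hg⁻¹H`, so
they can be matched with each other, and a self-inverse double coset made of an odd number of
cosets contains some `t = t⁻¹`. If `|H|` is odd, this is a fixed point of inversion on a set of
odd size. If `|G : H|` is odd, such a double coset is `H` itself: it contains some `x` with
`x² ∈ H`, and `x` then normalises `H ∩ xHx⁻¹`, a subgroup of odd index, so lies in it.
Sylow subgroups for distinct primes are therefore non-conjugate nontrivial proper perfect codes.
-/

open Function MulAction

section Pairing

open Finset

variable {X Q B : Type*} [DecidableEq Q] [DecidableEq B] {ι : X → X} {p : X → Q} {δ : Q → B}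
  {κ : B → B}

/-- Conditions for matching the points of `S`, each `q` with some `q'` labelled
`δ q' = κ (δ q)`, or with itself through a fixed point of `ι` above it. -/
def IsPairable (ι : X → X) (p : X → Q) (δ : Q → B) (κ : B → B) (S : Finset Q) : Prop :=
  (S.val.map δ).map κ = S.val.map δ ∧
    ∀ b, κ b = b → Odd ((S.val.map δ).count b) → ∃ x, ι x = x ∧ p x ∈ S ∧ δ (p x) = b

lemma bijOn_insert_of_bijOn_erase {T : Set X} {S : Finset Q} {x : X}
    (h : Set.BijOn p T (S.erase (p x))) (hx : p x ∈ S) : Set.BijOn p (insert x T) S := by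
  have := h.insert (a := x) (by simp)
  rwa [← coe_insert, insert_erase hx] at this

omit [DecidableEq B] in
lemma Finset.map_val_eq_cons_erase {S : Finset Q} {q : Q} (hq : q ∈ S) (f : Q → B) :
    S.val.map f = f q ::ₘ (S.erase q).val.map f := by
  rw [erase_val, ← Multiset.map_cons, Multiset.cons_erase hq]

lemma IsPairable.erase_of_odd {S : Finset Q} {x : X} (hS : IsPairable ι p δ κ S)
    (hxS : p x ∈ S) (hself : κ (δ (p x)) = δ (p x))
    (hodd : Odd ((S.val.map δ).count (δ (p x)))) : IsPairable ι p δ κ (S.erase (p x)) := by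
  have hM := S.map_val_eq_cons_erase hxS δ
  refine ⟨?_, fun b hb hb' => ?_⟩
  · have := hS.1
    rwa [hM, Multiset.map_cons, hself, Multiset.cons_inj_right] at this
  have hc := congrArg (Multiset.count b) hM
  rw [Multiset.count_cons] at hc
  by_cases hbx : b = δ (p x)
  · subst hbx
    rw [if_pos rfl] at hc
    rw [hc] at hodd
    exact absurd hodd (by simpa [parity_simps] using hb')
  · rw [if_neg hbx, add_zero] at hc
    obtain ⟨y, hy, hyS, hyb⟩ := hS.2 b hb (hc ▸ hb')
    exact ⟨y, hy, mem_erase.2 ⟨fun h => hbx (by rw [← hyb, h]), hyS⟩, hyb⟩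

lemma IsPairable.exists_partner (hκ : Involutive κ) {S : Finset Q} {q : Q}
    (hS : IsPairable ι p δ κ S) (hq : q ∈ S)
    (hodd : ¬(κ (δ q) = δ q ∧ Odd ((S.val.map δ).count (δ q)))) :
    ∃ q' ∈ S.erase q, δ q' = κ (δ q) := by
  have hc := congrArg (Multiset.count (κ (δ q))) (S.map_val_eq_cons_erase hq δ)
  simp_rw [← mem_val, ← Multiset.mem_map, ← Multiset.count_pos]
  rw [Multiset.count_cons] at hc
  by_cases hself : κ (δ q) = δ q
  · rw [if_pos hself] at hc
    rw [hself] at hc hodd ⊢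
    have := Nat.even_or_odd ((S.val.map δ).count (δ q))
    grind
  · rw [if_neg hself, add_zero, ← hS.1, Multiset.count_map_eq_count' _ _ hκ.injective] at hc
    exact hc ▸ Multiset.count_pos.2 (Multiset.mem_map_of_mem _ hq)

lemma IsPairable.erase_erase (hκ : Involutive κ) {S : Finset Q} {q q' : Q}
    (hS : IsPairable ι p δ κ S) (hq : q ∈ S) (hq' : q' ∈ S.erase q) (hδ : δ q' = κ (δ q))
    (hodd : ¬(κ (δ q) = δ q ∧ Odd ((S.val.map δ).count (δ q)))) :
    IsPairable ι p δ κ ((S.erase q).erase q') := by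
  have hM : S.val.map δ = δ q ::ₘ κ (δ q) ::ₘ ((S.erase q).erase q').val.map δ := by
    rw [S.map_val_eq_cons_erase hq δ, (S.erase q).map_val_eq_cons_erase hq' δ, hδ]
  refine ⟨?_, fun b hb hb' => ?_⟩
  · have := hS.1
    rw [hM, Multiset.map_cons, Multiset.map_cons, hκ, Multiset.cons_swap] at this
    exact (Multiset.cons_inj_right _).1 ((Multiset.cons_inj_right _).1 this)
  have hc := congrArg (Multiset.count b) hM
  rw [Multiset.count_cons, Multiset.count_cons] at hc
  by_cases hbq : b = δ q ∨ b = κ (δ q)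
  · obtain rfl : b = δ q := hbq.elim id fun h => by rw [← hb, h, hκ]
    rw [if_pos rfl, if_pos hb.symm] at hc
    exact (hodd ⟨hb, by rw [hc, add_assoc]; exact hb'.add_even even_two⟩).elim
  · rw [not_or] at hbq
    rw [if_neg hbq.1, if_neg hbq.2, add_zero, add_zero] at hc
    obtain ⟨y, hy, hyS, hyb⟩ := hS.2 b hb (hc ▸ hb')
    refine ⟨y, hy, mem_erase.2 ⟨fun h => hbq.2 ?_, mem_erase.2 ⟨fun h => hbq.1 ?_, hyS⟩⟩, hyb⟩
    · rw [← hyb, h, hδ]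
    · rw [← hyb, h]

theorem IsPairable.exists_mapsTo_bijOn (hι : Involutive ι) (hκ : Involutive κ)
    (hadj : ∀ q q', q ≠ q' → δ q' = κ (δ q) → ∃ x, p x = q ∧ p (ι x) = q')
    {S : Finset Q} (hS : IsPairable ι p δ κ S) :
    ∃ T : Set X, Set.MapsTo ι T T ∧ Set.BijOn p T S := by
  induction S using Finset.strongInduction with | H S ih => ?_
  obtain rfl | ⟨q, hq⟩ := S.eq_empty_or_nonempty
  · exact ⟨∅, Set.mapsTo_empty _ _, by simp⟩
  by_cases hodd : κ (δ q) = δ q ∧ Odd ((S.val.map δ).count (δ q))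
  · obtain ⟨x, hx, hxS, hxq⟩ := hS.2 _ hodd.1 hodd.2
    rw [← hxq] at hodd
    obtain ⟨T, hTι, hT⟩ := ih _ (erase_ssubset hxS) (hS.erase_of_odd hxS hodd.1 hodd.2)
    refine ⟨insert x T, ?_, bijOn_insert_of_bijOn_erase hT hxS⟩
    rintro y (rfl | hy)
    · simp [hx]
    · exact Set.mem_insert_of_mem _ (hTι hy)
  · obtain ⟨q', hq'S, hq'⟩ := hS.exists_partner hκ hq hodd
    have hpair := hS.erase_erase hκ hq hq'S hq' hodd
    obtain ⟨x, rfl, rfl⟩ := hadj q q' (ne_of_mem_erase hq'S).symm hq'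
    obtain ⟨T, hTι, hT⟩ := ih _ ((erase_ssubset hq'S).trans (erase_ssubset hq)) hpair
    refine ⟨insert x (insert (ι x) T), ?_,
      bijOn_insert_of_bijOn_erase (bijOn_insert_of_bijOn_erase hT hq'S) hq⟩
    rintro y (rfl | rfl | hy)
    · simp
    · simp [hι _]
    · exact Set.mem_insert_of_mem _ (Set.mem_insert_of_mem _ (hTι hy))

end Pairing

lemma Function.Involutive.exists_mem_eq_self_of_odd_card {α : Type*} {f : α → α}
    (hf : Involutive f) {s : Finset α} (hs : ∀ a ∈ s, f a ∈ s) (hodd : Odd s.card) :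
    ∃ a ∈ s, f a = a := by
  by_contra! h
  have := Finset.sum_involution (f := fun _ => (1 : ZMod 2)) (fun a _ => f a)
    (fun _ _ => by decide) (fun a ha _ => h a ha) hs (fun a _ => hf a)
  rw [Finset.sum_const, nsmul_one, ZMod.natCast_eq_zero_iff_even] at this
  exact Nat.not_even_iff_odd.2 hodd this

namespace Subgroup

variable {G : Type*} [Group G]

theorem IsComplement.inv {S T : Set G} (h : IsComplement S T) : IsComplement T⁻¹ S⁻¹ := by
  rw [isComplement_iff_existsUnique] at h ⊢
  intro g
  obtain ⟨⟨s, t⟩, hst, huniq⟩ := h g⁻¹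
  refine ⟨(⟨t⁻¹, by simp⟩, ⟨s⁻¹, by simp⟩), by simp [← mul_inv_rev, hst], ?_⟩
  rintro ⟨⟨a, ha⟩, ⟨b, hb⟩⟩ hab
  have := huniq (⟨b⁻¹, hb⟩, ⟨a⁻¹, ha⟩) (by simp [← mul_inv_rev, ← hab])
  simp only [Prod.ext_iff, Subtype.ext_iff] at this ⊢
  exact ⟨by simp [← this.2], by simp [← this.1]⟩

lemma isComplement_of_bijOn_mk {H : Subgroup G} {T : Set G}
    (h : Set.BijOn (QuotientGroup.mk : G → G ⧸ H) T Set.univ) : IsComplement T H := by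
  rw [isComplement_subgroup_right_iff_existsUnique_quotientGroupMk]
  intro q
  obtain ⟨t, ht, rfl⟩ := h.surjOn (Set.mem_univ q)
  exact ⟨⟨t, ht⟩, rfl, fun s hs => Subtype.ext (h.injOn s.2 ht hs)⟩

lemma card_conj_smul (g : G) (K : Subgroup G) :
    Nat.card (MulAut.conj g • K : Subgroup G) = Nat.card K :=
  Nat.card_congr (K.equivSMul (MulAut.conj g)).toEquiv.symm

lemma mem_of_sq_mem_of_mem_normalizer {M : Subgroup G} {x : G} (hodd : Odd M.index)
    (hx : x ∈ normalizer (M : Set G)) (hx2 : x ^ 2 ∈ M) : x ∈ M := by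
  obtain ⟨k, hk⟩ := hodd.of_dvd_nat (relIndex_dvd_index_of_le le_normalizer)
  have hpow : x ^ (2 * k + 1) ∈ M := by
    have := (M.subgroupOf (normalizer (M : Set G))).pow_index_mem ⟨x, hx⟩
    rwa [← relIndex, hk, mem_subgroupOf, SubgroupClass.coe_pow] at this
  rw [pow_succ, pow_mul] at hpow
  simpa using M.mul_mem (M.inv_mem (M.pow_mem hx2 k)) hpow

end Subgroup

namespace QuotientGroup

variable {G : Type*} [Group G] (H : Subgroup G)

/-- The double coset `HgH` of the left coset `q = gH`. -/
def doubleCoset (q : G ⧸ H) : Set G := (mk : G → G ⧸ H) ⁻¹' orbit H q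

variable {H}

lemma doubleCoset_eq_iff {q q' : G ⧸ H} :
    doubleCoset H q' = doubleCoset H q ↔ q' ∈ orbit H q :=
  (Set.preimage_injective.2 mk_surjective).eq_iff.trans orbit_eq_iff

lemma mem_doubleCoset_mk {g y : G} :
    y ∈ doubleCoset H (g : G ⧸ H) ↔ ∃ a ∈ H, ∃ b ∈ H, y = a * g * b := by
  simp only [doubleCoset, Set.mem_preimage, mem_orbit_iff, Subtype.exists]
  constructor
  · rintro ⟨a, ha, h⟩
    replace h : ((a * g : G) : G ⧸ H) = y := h
    exact ⟨a, ha, _, QuotientGroup.eq.1 h, by group⟩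
  · rintro ⟨a, ha, b, hb, rfl⟩
    exact ⟨a, ha, (QuotientGroup.eq.2 (by simpa [mul_assoc] using hb) : ((a * g : G) : G ⧸ H) = _)⟩

lemma inv_doubleCoset_mk (g : G) :
    (doubleCoset H (g : G ⧸ H))⁻¹ = doubleCoset H (mk g⁻¹ : G ⧸ H) := by
  ext y
  simp only [Set.mem_inv, mem_doubleCoset_mk]
  constructor
  · rintro ⟨a, ha, b, hb, hy⟩
    exact ⟨b⁻¹, H.inv_mem hb, a⁻¹, H.inv_mem ha, by rw [← inv_inv y, hy]; group⟩
  · rintro ⟨a, ha, b, hb, rfl⟩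
    exact ⟨b⁻¹, H.inv_mem hb, a⁻¹, H.inv_mem ha, by group⟩

lemma card_doubleCoset (q : G ⧸ H) :
    Nat.card (doubleCoset H q) = Nat.card H * (orbit H q).ncard := by
  rw [doubleCoset, Nat.card_congr (preimageMkEquivSubgroupProdSet H _), Nat.card_prod,
    Nat.card_coe_set_eq]

lemma card_fiber_doubleCoset (q : G ⧸ H) :
    Nat.card {q' : G ⧸ H // doubleCoset H q' = doubleCoset H q} = (orbit H q).ncard := by
  rw [← Nat.card_coe_set_eq]
  exact congrArg Nat.card (congrArg Set.Elem (Set.ext fun _ => doubleCoset_eq_iff))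

lemma card_fiber_doubleCoset_inv [Finite G] (b : Set G) :
    Nat.card {q : G ⧸ H // doubleCoset H q = b⁻¹} =
      Nat.card {q : G ⧸ H // doubleCoset H q = b} := by
  have key (b : Set G) : Nat.card ((mk : G → G ⧸ H) ⁻¹' {q | doubleCoset H q = b}) =
      Nat.card H * Nat.card {q : G ⧸ H // doubleCoset H q = b} := by
    rw [Nat.card_congr (preimageMkEquivSubgroupProdSet H _), Nat.card_prod]; rfl
  have hinv : Nat.card ((mk : G → G ⧸ H) ⁻¹' {q | doubleCoset H q = b⁻¹}) =
      Nat.card ((mk : G → G ⧸ H) ⁻¹' {q | doubleCoset H q = b}) :=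
    Nat.card_congr <| (Equiv.inv G).subtypeEquiv fun g => by
      simp [← inv_doubleCoset_mk, inv_eq_iff_eq_inv]
  rw [key, key] at hinv
  exact Nat.eq_of_mul_eq_mul_left Nat.card_pos hinv

lemma exists_mk_eq_and_mk_inv_eq {u v : G ⧸ H} (h : doubleCoset H v = (doubleCoset H u)⁻¹) :
    ∃ t : G, (t : G ⧸ H) = u ∧ (mk t⁻¹ : G ⧸ H) = v := by
  induction u using QuotientGroup.induction_on with | H u => ?_
  induction v using QuotientGroup.induction_on with | H v => ?_
  rw [inv_doubleCoset_mk, doubleCoset_eq_iff] at h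
  obtain ⟨a, ha, b, hb, rfl⟩ := mem_doubleCoset_mk.1 h
  refine ⟨u * a⁻¹, ?_, ?_⟩ <;> rw [QuotientGroup.eq]
  · simpa using H.inv_mem ha
  · simpa [mul_assoc] using hb

lemma mem_of_sq_mem_of_odd_index {x : G} (hx : x ^ 2 ∈ H) (hH : Odd H.index)
    (horb : Odd (orbit H (x : G ⧸ H)).ncard) : x ∈ H := by
  -- `M = H ∩ xHx⁻¹`, the stabiliser of `xH` in `H`
  set M := (stabilizer H (x : G ⧸ H)).map H.subtype
  have hmem (m : G) : m ∈ M ↔ m ∈ H ∧ x⁻¹ * m * x ∈ H := by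
    simp only [M, Subgroup.mem_map, mem_stabilizer_iff, Subgroup.coe_subtype, Subtype.exists]
    constructor
    · rintro ⟨a, ha, h, rfl⟩
      replace h : ((a * x : G) : G ⧸ H) = x := h
      simpa [ha, mul_assoc] using H.inv_mem (QuotientGroup.eq.1 h)
    · rintro ⟨hm, h⟩
      refine ⟨m, hm, ?_, rfl⟩
      change ((m * x : G) : G ⧸ H) = x
      rw [QuotientGroup.eq]
      simpa [mul_assoc] using H.inv_mem h
  have hxN : x ∈ Subgroup.normalizer (M : Set G) := Subgroup.mem_normalizer_iff.2 fun m => by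
    have : x * m * x⁻¹ = x ^ 2 * (x⁻¹ * m * x) * (x ^ 2)⁻¹ := by group
    rw [hmem, hmem, show x⁻¹ * (x * m * x⁻¹) * x = m by group, this,
      H.mul_mem_cancel_right (H.inv_mem hx), H.mul_mem_cancel_left hx, and_comm]
  refine ((hmem x).1 (Subgroup.mem_of_sq_mem_of_mem_normalizer ?_ hxN ((hmem _).2 ⟨hx, ?_⟩))).1
  · rw [Subgroup.index_map_subtype, index_stabilizer]
    exact horb.mul hH
  · simpa [pow_two, mul_assoc] using hx

lemma one_mem_doubleCoset_of_odd_index {q : G ⧸ H}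
    (hq : (doubleCoset H q)⁻¹ = doubleCoset H q) (hH : Odd H.index)
    (horb : Odd (orbit H q).ncard) : (1 : G) ∈ doubleCoset H q := by
  induction q using QuotientGroup.induction_on with | H g => ?_
  have hg : g⁻¹ ∈ doubleCoset H (g : G ⧸ H) := by
    rw [← hq, Set.inv_mem_inv]; exact mem_orbit_self _
  obtain ⟨a, ha, b, hb, hab⟩ := mem_doubleCoset_mk.1 hg
  have hxD : g * b ∈ doubleCoset H (g : G ⧸ H) :=
    mem_doubleCoset_mk.2 ⟨1, H.one_mem, b, hb, by group⟩
  have hx2 : (g * b) ^ 2 ∈ H := by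
    have hgb : g * b = a⁻¹ * g⁻¹ := by rw [hab]; group
    rw [pow_two]
    nth_rewrite 1 [hgb]
    simpa [mul_assoc] using H.mul_mem (H.inv_mem ha) hb
  have hxH := mem_of_sq_mem_of_odd_index hx2 hH (by rwa [orbit_eq_iff.2 hxD])
  show ((1 : G) : G ⧸ H) ∈ orbit H (g : G ⧸ H)
  rwa [show ((1 : G) : G ⧸ H) = ((g * b : G) : G ⧸ H) from
    QuotientGroup.eq.2 (by simpa using hxH)]

lemma exists_inv_eq_self_mem_doubleCoset [Finite G] (hH : Odd (Nat.card H) ∨ Odd H.index)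
    {q : G ⧸ H} (hq : (doubleCoset H q)⁻¹ = doubleCoset H q) (horb : Odd (orbit H q).ncard) :
    ∃ t ∈ doubleCoset H q, t⁻¹ = t := by
  classical
  rcases hH with hH | hH
  · have := Fintype.ofFinite G
    simpa using inv_involutive.exists_mem_eq_self_of_odd_card (s := (doubleCoset H q).toFinset)
      (fun a ha => by
        rw [Set.mem_toFinset] at ha ⊢
        rw [← hq]
        exact Set.inv_mem_inv.2 ha)
      (by rw [Set.toFinset_card, ← Nat.card_eq_fintype_card, card_doubleCoset]; exact hH.mul horb)
  · exact ⟨1, one_mem_doubleCoset_of_odd_index hq hH horb, inv_one⟩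

end QuotientGroup

open QuotientGroup in
theorem isPerfectCode_of_odd_card_or_odd_index {G : Type*} [Group G] [Finite G]
    {H : Subgroup G} (hH : Odd (Nat.card H) ∨ Odd H.index) : IsPerfectCode H := by
  classical
  have := Fintype.ofFinite (G ⧸ H)
  have hcount (b : Set G) : ((Finset.univ : Finset (G ⧸ H)).val.map (doubleCoset H)).count b =
      Nat.card {q : G ⧸ H // doubleCoset H q = b} := by
    rw [Multiset.count_map, Nat.card_eq_fintype_card, Fintype.card_subtype]
    simp_rw [eq_comm (a := b)]
    rw [← Finset.filter_val, Finset.card_val]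
  have hpair : IsPairable Inv.inv mk (doubleCoset H) Inv.inv Finset.univ := by
    refine ⟨Multiset.ext.2 fun b => ?_, fun b hb hodd => ?_⟩
    · have := Multiset.count_map_eq_count' _
        ((Finset.univ : Finset (G ⧸ H)).val.map (doubleCoset H)) inv_injective b⁻¹
      rw [inv_inv] at this
      rw [this, hcount, hcount, card_fiber_doubleCoset_inv]
    · rw [hcount] at hodd
      obtain ⟨⟨q, rfl⟩⟩ := (Nat.card_pos_iff.1 hodd.pos).1
      rw [card_fiber_doubleCoset] at hodd
      obtain ⟨t, ht, htt⟩ := exists_inv_eq_self_mem_doubleCoset hH hb hodd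
      exact ⟨t, htt, Finset.mem_univ _, doubleCoset_eq_iff.2 ht⟩
  obtain ⟨T, hTinv, hT⟩ := hpair.exists_mapsTo_bijOn inv_involutive inv_involutive
    fun u v _ h => exists_mk_eq_and_mk_inv_eq h
  have hTT : T⁻¹ = T :=
    Set.Subset.antisymm (fun y hy => inv_inv y ▸ hTinv hy) (fun y hy => hTinv hy)
  refine ⟨T, ?_, hTT⟩
  have := (Subgroup.isComplement_of_bijOn_mk (by simpa using hT)).inv
  rwa [hTT, inv_coe_set] at this

theorem Sylow.isPerfectCode {G : Type*} [Group G] [Finite G] {p : ℕ} [Fact p.Prime]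
    (P : Sylow p G) : IsPerfectCode (P : Subgroup G) := by
  apply isPerfectCode_of_odd_card_or_odd_index
  rcases (Fact.out : p.Prime).eq_two_or_odd' with rfl | hp
  · exact Or.inr (Nat.odd_iff.2 (Nat.two_dvd_ne_zero.1 P.not_dvd_index))
  · exact Or.inl (P.card_eq_multiplicity ▸ hp.pow)

lemma exists_nontrivialProperPerfectCode_primeFactors_card_eq {G : Type*} [Group G] [Finite G]
    (h : 2 ≤ (Nat.card G).primeFactors.card) {p : ℕ} (hp : p ∈ (Nat.card G).primeFactors) :
    ∃ K : NontrivialProperPerfectCode G, (Nat.card K.1).primeFactors = {p} := by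
  have := Fact.mk (Nat.prime_of_mem_primeFactors hp)
  obtain ⟨P⟩ := Sylow.nonempty (p := p) (G := G)
  have hcard : (Nat.card P).primeFactors = {p} := by
    rw [P.card_eq_multiplicity, Nat.primeFactors_prime_pow (Finsupp.mem_support_iff.1 hp) Fact.out]
  refine ⟨⟨P, P.ne_bot_of_dvd_card (Nat.dvd_of_mem_primeFactors hp), fun htop => ?_,
    P.isPerfectCode⟩, hcard⟩
  rw [htop, Subgroup.card_top] at hcard
  rw [hcard, Finset.card_singleton] at h
  omega

theorem stmt_13 {G : Type*} [Group G] [Fintype G]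
    (h : 2 ≤ (Nat.card G).primeFactors.card) :
    (Nat.card G).primeFactors.card ≤ Nat.card (PerfectCodeConjClasses G) := by
  choose K hK using fun p : (Nat.card G).primeFactors =>
    exists_nontrivialProperPerfectCode_primeFactors_card_eq h p.2
  let primes : PerfectCodeConjClasses G → Finset ℕ :=
    Quot.lift (fun K => (Nat.card K.1).primeFactors) <| by
      rintro K K' ⟨g, hg⟩
      simp only [← hg, Subgroup.card_conj_smul]
  have hinj : Injective fun p => (Quot.mk _ (K p) : PerfectCodeConjClasses G) := fun p q hpq =>
    Subtype.ext <| Finset.singleton_inj.1 <| (hK p).symm.trans <| (congrArg primes hpq).trans (hK q)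
  have : Finite (NontrivialProperPerfectCode G) := by
    unfold NontrivialProperPerfectCode
    infer_instance
  have : Finite (PerfectCodeConjClasses G) := Quot.finite _
  exact (Nat.card_eq_finsetCard _).symm.trans_le (Nat.card_le_card_of_injective _ hinj)
end

section
/- Let G be a finite solvable group. Then the number of conjugacy classes of nontrivial proper subgroup perfect codes of G is at least 2^{|π(G)|} − 2. -/
open Pointwise

/-!
By Hall's theorem, for every nonempty proper set `π` of primes dividing `|G|` there is a Hall
`π`-subgroup `H`. A Hall subgroup for the complementary primes is a complement of `H`, and being a
subgroup it is an inverse-closed transversal, so `H` is a perfect code. Conjugate subgroups have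
the same order, and the primes dividing `|H|` are exactly `π`, so these `2 ^ |π(G)| - 2` perfect
codes are pairwise non-conjugate.

Hall's theorem goes by induction on `|G|`: a Sylow subgroup of the last nontrivial term of the
derived series is a nontrivial normal `p`-subgroup `N`; the preimage of a Hall `π`-subgroup of
`G ⧸ N` is one of `G` if `p ∈ π`, and otherwise contains `N` as a normal Hall subgroup, whose
Schur–Zassenhaus complement is a Hall `π`-subgroup of `G`.
-/

theorem Nat.eq_of_mul_eq_mul_of_coprime {a b c d : ℕ} (h : a * b = c * d) (hac : a.Coprime c)
    (hdb : d.Coprime b) : a = d :=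
  Nat.dvd_antisymm (hac.dvd_of_dvd_mul_left (h ▸ dvd_mul_right a b))
    (hdb.dvd_of_dvd_mul_right (h ▸ dvd_mul_left d c))

theorem Nat.coprime_of_primeFactors_subset_of_disjoint {a b : ℕ} {s : Finset ℕ} (ha₀ : a ≠ 0)
    (hb₀ : b ≠ 0) (ha : a.primeFactors ⊆ s) (hb : Disjoint b.primeFactors s) : a.Coprime b :=
  (Nat.disjoint_primeFactors ha₀ hb₀).mp (hb.symm.mono_left ha)

theorem Finset.two_pow_card_sub_two_le {α : Type*} [DecidableEq α] (s : Finset α) :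
    2 ^ s.card - 2 ≤ (s.powerset \ {∅, s}).card := by
  have h := Finset.le_card_sdiff {∅, s} s.powerset
  have h₂ : ({∅, s} : Finset (Finset α)).card ≤ 2 := Finset.card_le_two
  rw [Finset.card_powerset] at h
  omega

theorem Finset.card_le_nat_card_of_subset_range {α β : Type*} [Finite α] {f : α → β}
    {s : Finset β} (h : (s : Set β) ⊆ Set.range f) : s.card ≤ Nat.card α := by
  classical
  have := Fintype.ofFinite α
  rw [Nat.card_eq_fintype_card, ← Finset.card_univ]
  exact Finset.card_le_card_of_surjOn f fun b hb ↦ by simpa using h hb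

namespace Subgroup

variable {G : Type*} [Group G]

theorem exists_isMulCommutative_normal_ne_bot [Group.IsSolvable G] [Nontrivial G] :
    ∃ A : Subgroup G, A.Normal ∧ A ≠ ⊥ ∧ IsMulCommutative A := by
  classical
  have hex : ∃ n, derivedSeries G n = ⊥ := Group.IsSolvable.solvable
  have hm : Nat.find hex ≠ 0 := by
    intro h
    have h₀ := Nat.find_spec hex
    rw [h, derivedSeries_zero] at h₀
    exact top_ne_bot h₀
  refine ⟨derivedSeries G (Nat.find hex - 1), derivedSeries_normal G _,
    Nat.find_min hex (Nat.sub_one_lt hm), commutator_self_eq_bot_iff.mp ?_⟩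
  rw [← derivedSeries_succ, Nat.sub_one_add_one hm]
  exact Nat.find_spec hex

theorem exists_isPGroup_normal_ne_bot [Finite G] [Group.IsSolvable G] [Nontrivial G] :
    ∃ p, p.Prime ∧ ∃ N : Subgroup G, N.Normal ∧ N ≠ ⊥ ∧ IsPGroup p N := by
  obtain ⟨A, hAn, hA, hAc⟩ := exists_isMulCommutative_normal_ne_bot (G := G)
  obtain ⟨p, hp, hpA⟩ := Nat.exists_prime_and_dvd ((one_lt_card_iff_ne_bot A).mpr hA).ne'
  have := Fact.mk hp
  let P : Sylow p A := default
  -- the Sylow subgroup of the abelian group `A` is characteristic in `A`, hence normal in `G`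
  have := P.characteristic_of_normal (normal_of_isMulCommutative _)
  refine ⟨p, hp, (P : Subgroup A).map A.subtype, inferInstance, ?_, P.2.map _⟩
  rw [Ne, map_eq_bot_iff_of_injective _ A.subtype_injective]
  exact P.ne_bot_of_dvd_card hpA

def IsHall (π : Finset ℕ) (H : Subgroup G) : Prop :=
  (Nat.card H).primeFactors ⊆ π ∧ Disjoint H.index.primeFactors π

section Finite

variable [Finite G] {π : Finset ℕ} {H K : Subgroup G} {a b : ℕ}

theorem isHall_of_index_eq (hab : a * b = Nat.card G) (hH : H.index = b)
    (ha : a.primeFactors ⊆ π) (hb : Disjoint b.primeFactors π) : H.IsHall π := by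
  have hb₀ : 0 < b := Nat.pos_of_ne_zero (right_ne_zero_of_mul (hab ▸ Nat.card_pos.ne'))
  have hHa : Nat.card H = a :=
    Nat.eq_of_mul_eq_mul_right hb₀ (by rw [← hH, card_mul_index, hH, hab])
  exact ⟨hHa ▸ ha, hH ▸ hb⟩

theorem IsHall.primeFactors_card_eq (hH : H.IsHall π) (hπ : π ⊆ (Nat.card G).primeFactors) :
    (Nat.card H).primeFactors = π := by
  refine hH.1.antisymm fun q hq ↦ ?_
  obtain ⟨hqp, hqG, -⟩ := Nat.mem_primeFactors.mp (hπ hq)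
  have hqi : ¬q ∣ H.index := fun h ↦
    Finset.disjoint_left.mp hH.2 (Nat.mem_primeFactors.mpr ⟨hqp, h, index_ne_zero_of_finite⟩) hq
  rw [← card_mul_index H] at hqG
  exact Nat.mem_primeFactors.mpr
    ⟨hqp, (hqp.dvd_mul.mp hqG).resolve_right hqi, Nat.card_pos.ne'⟩

theorem IsHall.isComplement' {ρ : Finset ℕ} (hH : H.IsHall π) (hK : K.IsHall ρ)
    (hπρ : Disjoint π ρ) (hG : (Nat.card G).primeFactors ⊆ π ∪ ρ) : H.IsComplement' K := by
  have hHK : (Nat.card H).Coprime (Nat.card K) :=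
    Nat.coprime_of_primeFactors_subset_of_disjoint Nat.card_pos.ne' Nat.card_pos.ne' hH.1
      (hπρ.symm.mono_left hK.1)
  have hKi : K.index.primeFactors ⊆ π :=
    hK.2.left_le_of_le_sup_right
      ((Nat.primeFactors_mono K.index_dvd_card Nat.card_pos.ne').trans hG)
  have hi : K.index.Coprime H.index :=
    Nat.coprime_of_primeFactors_subset_of_disjoint index_ne_zero_of_finite
      index_ne_zero_of_finite hKi hH.2
  have hHi : Nat.card H = K.index :=
    Nat.eq_of_mul_eq_mul_of_coprime (by rw [card_mul_index, card_mul_index]) hHK hi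
  exact isComplement'_of_coprime (by rw [hHi, mul_comm, card_mul_index]) hHK

theorem exists_isHall_of_isPGroup_of_normal {p : ℕ} (hp : p.Prime) {N : Subgroup G} [N.Normal]
    (hN : IsPGroup p N) {Q : Subgroup (G ⧸ N)} (hQ : Q.IsHall π) :
    ∃ H : Subgroup G, H.IsHall π := by
  have hNp : (Nat.card N).primeFactors ⊆ {p} := by
    simpa [hp.primeFactors] using (isPGroup_iff_primeFactors_card_subset hp.ne_zero).mp hN
  have hG : Nat.card Q * Q.index * Nat.card N = Nat.card G := by
    rw [Q.card_mul_index, ← card_eq_card_quotient_mul_card_subgroup]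
  set H₀ := Q.comap (QuotientGroup.mk' N)
  have hH₀ : H₀.index = Q.index := index_comap_of_surjective _ (QuotientGroup.mk'_surjective N)
  by_cases hpπ : p ∈ π
  · refine ⟨H₀, isHall_of_index_eq (a := Nat.card Q * Nat.card N) (by rw [← hG]; ring) hH₀ ?_ hQ.2⟩
    rw [Nat.primeFactors_mul Nat.card_pos.ne' Nat.card_pos.ne']
    exact Finset.union_subset hQ.1 (hNp.trans (Finset.singleton_subset_iff.mpr hpπ))
  · -- `N` is a normal Hall subgroup of `H₀`, so Schur–Zassenhaus gives a complement
    have hNH₀ : N ≤ H₀ := by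
      rw [← QuotientGroup.ker_mk' N]
      exact MonoidHom.ker_le_comap _ _
    have hNQ : Disjoint (Nat.card N).primeFactors π :=
      Finset.disjoint_of_subset_left hNp (Finset.disjoint_singleton_left.mpr hpπ)
    have hN' : Nat.card (N.subgroupOf H₀) = Nat.card N :=
      Nat.card_congr (subgroupOfEquivOfLe hNH₀).toEquiv
    have hcard : Nat.card H₀ = Nat.card N * Nat.card Q :=
      QuotientGroup.card_preimage_mk N Q
    have hidx : (N.subgroupOf H₀).index = Nat.card Q :=
      Nat.eq_of_mul_eq_mul_left Nat.card_pos (by rw [← hcard, ← hN', card_mul_index])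
    obtain ⟨K, hK⟩ := exists_right_complement'_of_coprime (N := N.subgroupOf H₀) (by
      rw [hN', hidx]
      exact (Nat.coprime_of_primeFactors_subset_of_disjoint Nat.card_pos.ne' Nat.card_pos.ne'
        hQ.1 hNQ).symm)
    refine ⟨K.map H₀.subtype, isHall_of_index_eq (a := Nat.card Q) (b := Nat.card N * Q.index)
      (by rw [← hG]; ring) (by rw [index_map_subtype, hK.index_eq_card, hN', hH₀]) hQ.1 ?_⟩
    rw [Nat.primeFactors_mul Nat.card_pos.ne' index_ne_zero_of_finite]
    exact Finset.disjoint_union_left.mpr ⟨hNQ, hQ.2⟩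

end Finite

theorem exists_isHall [Finite G] [Group.IsSolvable G] (π : Finset ℕ) :
    ∃ H : Subgroup G, H.IsHall π := by
  induction hn : Nat.card G using Nat.strong_induction_on generalizing G with
  | _ n ih =>
  rcases subsingleton_or_nontrivial G with hG | hG
  · exact ⟨⊥, by simp [IsHall, Nat.card_unique]⟩
  obtain ⟨p, hp, N, hNn, hN, hNp⟩ := exists_isPGroup_normal_ne_bot (G := G)
  have hlt : Nat.card (G ⧸ N) < n := by
    rw [← hn, card_eq_card_quotient_mul_card_subgroup N]
    exact lt_mul_of_one_lt_right Nat.card_pos ((one_lt_card_iff_ne_bot N).mpr hN)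
  obtain ⟨Q, hQ⟩ := ih _ hlt rfl
  exact exists_isHall_of_isPGroup_of_normal hp hNp hQ

theorem IsHall.isPerfectCode [Finite G] [Group.IsSolvable G] {π : Finset ℕ} {H : Subgroup G}
    (hH : H.IsHall π) : IsPerfectCode H := by
  obtain ⟨K, hK⟩ := exists_isHall (G := G) ((Nat.card G).primeFactors \ π)
  refine ⟨K, hH.isComplement' hK Finset.disjoint_sdiff ?_, inv_coe_set⟩
  rw [Finset.union_sdiff_self_eq_union]
  exact Finset.subset_union_right

end Subgroup

instance {G : Type*} [Group G] [Finite G] : Finite (NontrivialProperPerfectCode G) :=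
  Subtype.finite

namespace PerfectCodeConjClasses

variable {G : Type*} [Group G]

variable (G) in
noncomputable def primeFactorsCard : PerfectCodeConjClasses G → Finset ℕ :=
  Quot.lift (fun H ↦ (Nat.card H.1).primeFactors) <| by
    rintro H K ⟨g, hg⟩
    rw [← hg, Nat.card_congr (Subgroup.equivSMul (MulAut.conj g) H.1).toEquiv]

instance [Finite G] : Finite (PerfectCodeConjClasses G) :=
  Quot.finite _

theorem mem_range_primeFactorsCard [Finite G] [Group.IsSolvable G]
    {π : Finset ℕ} (hπ : π ∈ (Nat.card G).primeFactors.powerset \ {∅, (Nat.card G).primeFactors}) :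
    π ∈ Set.range (primeFactorsCard G) := by
  simp only [Finset.mem_sdiff, Finset.mem_powerset, Finset.mem_insert, Finset.mem_singleton,
    not_or] at hπ
  obtain ⟨hsub, hne, hne'⟩ := hπ
  obtain ⟨H, hH⟩ := Subgroup.exists_isHall (G := G) π
  have hHπ := hH.primeFactors_card_eq hsub
  have hbot : H ≠ ⊥ := by
    rintro rfl
    rw [Subgroup.card_bot, Nat.primeFactors_one] at hHπ
    exact hne hHπ.symm
  have htop : H ≠ ⊤ := by
    rintro rfl
    rw [Subgroup.card_top] at hHπ
    exact hne' hHπ.symm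
  exact ⟨Quot.mk _ ⟨H, hbot, htop, hH.isPerfectCode⟩, hHπ⟩

end PerfectCodeConjClasses

theorem stmt_15 {G : Type*} [Group G] [Fintype G] (hsol : IsSolvable G) :
    2 ^ (Nat.card G).primeFactors.card - 2 ≤ Nat.card (PerfectCodeConjClasses G) := by
  have : Group.IsSolvable G := hsol
  exact (Finset.two_pow_card_sub_two_le _).trans <| Finset.card_le_nat_card_of_subset_range
    fun _ hπ ↦ PerfectCodeConjClasses.mem_range_primeFactorsCard hπ
end

section
/- Let p ≥ 5 be a prime such that p + 1 is a power of 2 (so p is a Mersenne prime) and (p−1)/2 is the product of two distinct odd primes. Then p = 31. -/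
theorem stmt_19 (p : ℕ) (hp : p.Prime) (h5 : 5 ≤ p)
    (h1 : ∃ k : ℕ, p + 1 = 2 ^ k)
    (h2 : ∃ r₁ r₂ : ℕ, r₁.Prime ∧ r₂.Prime ∧ Odd r₁ ∧ Odd r₂ ∧ r₁ < r₂ ∧
      (p - 1) / 2 = r₁ * r₂) :
    p = 31 := by
  obtain ⟨k, hk⟩ := h1
  obtain ⟨r₁, r₂, hr₁, hr₂, ho₁, ho₂, hlt, hprod⟩ := h2
  -- k is odd: otherwise 3 ∣ p
  have hk3 : 3 ≤ k := by
    by_contra h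
    interval_cases k <;> omega
  have hkodd : Odd k := by
    rcases Nat.even_or_odd k with he | ho
    · exfalso
      obtain ⟨j, hj⟩ := he
      have h3 : 3 ∣ p := by
        have : (3 : ℕ) ∣ 4 ^ j - 1 := by
          have := Nat.sub_dvd_pow_sub_pow 4 1 j
          simpa using this
        have h4 : p = 4 ^ j - 1 := by
          have : (4 : ℕ) ^ j = 2 ^ k := by
            rw [hj, pow_add, show (4:ℕ) = 2 * 2 from rfl, mul_pow]
          omega
        rwa [h4]
      have := (Nat.Prime.eq_one_or_self_of_dvd hp 3 h3)
      omega
    · exact ho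
  obtain ⟨m, hm⟩ := hkodd
  have hm1 : 1 ≤ m := by
    rcases Nat.eq_zero_or_pos m with h0 | h; · omega
    · exact h
  -- (p-1)/2 = (2^m - 1)(2^m + 1)
  have hpm : p = 2 ^ (2 * m + 1) - 1 := by rw [← hm]; omega
  have h2m : 2 ≤ 2 ^ m := Nat.one_lt_two_pow (by omega)
  have hfac : r₁ * r₂ = (2 ^ m - 1) * (2 ^ m + 1) := by
    rw [← hprod]
    have : 2 ^ (2 * m + 1) = 2 * (2 ^ m * 2 ^ m) := by
      rw [pow_succ, two_mul, pow_add]; ring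
    have heq : (p - 1) / 2 = 2 ^ m * 2 ^ m - 1 := by omega
    rw [heq, Nat.sub_one_mul, Nat.mul_add, Nat.mul_one]
    omega
  set a := 2 ^ m - 1 with ha
  set b := 2 ^ m + 1 with hb
  -- m ≥ 2, so a ≥ 3
  have hr1o : 3 ≤ r₁ := by
    rcases ho₁ with ⟨t, ht⟩
    have := hr₁.two_le
    omega
  have hr2o : 5 ≤ r₂ := by
    rcases ho₂ with ⟨t, ht⟩
    have := hr₂.two_le
    omega
  have hm2 : 2 ≤ m := by
    by_contra h
    have : m = 1 := by omega
    subst this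
    simp only [ha, hb] at hfac
    norm_num at hfac
    nlinarith
  have ha3 : 3 ≤ a := by
    have : 4 ≤ 2 ^ m := by calc 4 = 2^2 := by norm_num
                                 _ ≤ 2^m := Nat.pow_le_pow_right (by norm_num) hm2
    omega
  have hab : a < b := by omega
  -- r₁ = a and r₂ = b
  have hd1 : r₁ ∣ a ∨ r₁ ∣ b := by
    apply (Nat.Prime.dvd_mul hr₁).mp
    exact hfac ▸ Dvd.intro r₂ rfl
  have hd2 : r₂ ∣ a ∨ r₂ ∣ b := by
    apply (Nat.Prime.dvd_mul hr₂).mp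
    exact hfac ▸ Dvd.intro_left r₁ rfl
  have hcop : Nat.Coprime r₁ r₂ := (Nat.coprime_primes hr₁ hr₂).mpr (by omega)
  have key : a = r₁ ∧ b = r₂ := by
    rcases hd1 with h1a | h1b <;> rcases hd2 with h2a | h2b
    · exfalso
      have : r₁ * r₂ ∣ a := Nat.Coprime.mul_dvd_of_dvd_of_dvd hcop h1a h2a
      have := Nat.le_of_dvd (by omega) this
      nlinarith
    · obtain ⟨s, hs⟩ := h1a
      obtain ⟨t, htt⟩ := h2b
      have h : r₁ * r₂ = (r₁ * r₂) * (s * t) := by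
        calc r₁ * r₂ = a * b := hfac
          _ = (r₁ * s) * (r₂ * t) := by rw [hs, htt]
          _ = (r₁ * r₂) * (s * t) := by ring
      have h1 : r₁ * r₂ * 1 = r₁ * r₂ * (s * t) := by rw [mul_one]; exact h
      have hst := (Nat.eq_of_mul_eq_mul_left (show 0 < r₁ * r₂ by positivity) h1).symm
      have hs1 : s = 1 := Nat.eq_one_of_mul_eq_one_right hst
      have ht1 : t = 1 := Nat.eq_one_of_mul_eq_one_left hst
      subst hs1; subst ht1
      simp only [mul_one] at hs htt
      exact ⟨hs, htt⟩
    · exfalso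
      have h1 : r₂ ≤ a := Nat.le_of_dvd (by omega) h2a
      have h2 : r₁ ≤ b := Nat.le_of_dvd (by omega) h1b
      -- r₁*r₂ = a*b, r₂ ≤ a < b, r₁ < r₂ ≤ a so r₁ * r₂ < a * b unless...
      nlinarith
    · exfalso
      have : r₁ * r₂ ∣ b := Nat.Coprime.mul_dvd_of_dvd_of_dvd hcop h1b h2b
      have := Nat.le_of_dvd (by omega) this
      nlinarith
  obtain ⟨hka, hkb⟩ := key
  -- 3 divides a*b; both a,b prime; conclude a = 3
  have h3ab : (3 : ℕ) ∣ a * b := by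
    have : a * b = 4 ^ m - 1 := by
      have : (4 : ℕ) ^ m = 2 ^ m * 2 ^ m := by
        rw [show (4:ℕ) = 2 * 2 from rfl, mul_pow]
      simp only [ha, hb]
      rw [Nat.sub_one_mul, Nat.mul_add, Nat.mul_one]
      omega
    rw [this]
    have := Nat.sub_dvd_pow_sub_pow 4 1 m
    simpa using this
  have h3 : (3 : ℕ) ∣ a ∨ (3 : ℕ) ∣ b := (Nat.Prime.dvd_mul (by norm_num)).mp h3ab
  have hm2' : m = 2 := by
    rcases h3 with h3a | h3b
    · have : a = 3 := by
        have := (hka ▸ hr₁).eq_one_or_self_of_dvd 3 h3a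
        omega
      -- 2^m - 1 = 3, so 2^m = 4
      have h4 : 2 ^ m = 4 := by omega
      have : m = 2 := by
        by_contra h
        rcases Nat.lt_or_ge m 2 with h' | h'
        · omega
        · have : 3 ≤ m := by omega
          have : 8 ≤ 2 ^ m := by calc (8:ℕ) = 2^3 := by norm_num
                                        _ ≤ 2^m := Nat.pow_le_pow_right (by norm_num) this
          omega
      exact this
    · exfalso
      have : b = 3 := by
        have := (hkb ▸ hr₂).eq_one_or_self_of_dvd 3 h3b
        omega
      omega
  subst hm2'
  omega
end
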